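/- arXiv:2109.08251 — 2 statements merged into one kernel-verified Lean document; each statement's English description precedes it below -/
import Mathlib

section
/- Let λ be a partition with at most n parts and let n' ≥ n. Then B_λ^n is order-isomorphic to a principal order ideal of B_λ^{n'} (namely, the set of tableaux of shape λ with entries at most n+1, under the crystal order of B_λ^{n'}). Consequently, if B_λ^n is not a lattice, then B_λ^{n'} is not a lattice. -/
/-- A semistandard Young tableau of shape `lam` (rows indexed from `1`; `lam i` is the
length of row `i`) with entries in `{1, …, n+1}`.  Entries outside the shape are `0`. -/
structure Tableau (n : ℕ) (lam : ℕ → ℕ) where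
  entry : ℕ → ℕ → ℕ
  entry_pos : ∀ i j, 1 ≤ i → 1 ≤ j → j ≤ lam i → 1 ≤ entry i j
  entry_le : ∀ i j, 1 ≤ i → 1 ≤ j → j ≤ lam i → entry i j ≤ n + 1
  row_weak : ∀ i j, 1 ≤ i → 1 ≤ j → j + 1 ≤ lam i → entry i j ≤ entry i (j + 1)
  col_strict : ∀ i j, 1 ≤ i → 1 ≤ j → j ≤ lam i → j ≤ lam (i + 1) →
    entry i j < entry (i + 1) j
  zero_outside : ∀ i j, i = 0 ∨ j = 0 ∨ lam i < j → entry i j = 0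

/-- The reading word of `T` (rows read from bottom to top, each row left to right),
with each letter recorded together with the cell it comes from. -/
def readingList (n : ℕ) (lam : ℕ → ℕ) (T : Tableau n lam) : List ((ℕ × ℕ) × ℕ) :=
  ((List.range n).map fun k =>
    (List.range (lam (n - k))).map fun j => ((n - k, j + 1), T.entry (n - k) (j + 1))).flatten

/-- The reading word of `T`. -/
def word (n : ℕ) (lam : ℕ → ℕ) (T : Tableau n lam) : List ℕ :=
  (readingList n lam T).map Prod.snd

/-- The contiguous segment `w[a..b]` (inclusive, `0`-indexed) of the list `w`. -/
def seg (w : List ℕ) (a b : ℕ) : List ℕ := (w.drop a).take (b + 1 - a)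

/-- Viewing each letter `i` of `w` as `)` and each letter `i+1` as `(` (ignoring all
other letters), the `)` in position `p` is unmatched.  This holds exactly when the
letter at position `p` is `i` and every segment of `w` ending at position `p` contains
strictly more `i`'s than `(i+1)`'s. -/
def UnmatchedClose (i : ℕ) (w : List ℕ) (p : ℕ) : Prop :=
  w[p]? = some i ∧ ∀ j, j ≤ p → (seg w j p).count (i + 1) < (seg w j p).count i

/-- `FRel n lam i T T'` says that `F i T ≠ 0` and `T' = F i T`; that is, `T'` is obtained
from `T` by changing to `i+1` the entry `i` corresponding to the rightmost unmatched `)`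
in the reading word of `T`. -/
def FRel (n : ℕ) (lam : ℕ → ℕ) (i : ℕ) (T T' : Tableau n lam) : Prop :=
  ∃ p : ℕ, UnmatchedClose i (word n lam T) p ∧
    (∀ q, p < q → ¬ UnmatchedClose i (word n lam T) q) ∧
    ∃ r c : ℕ, (readingList n lam T)[p]? = some ((r, c), i) ∧
      ∀ r' c' : ℕ, T'.entry r' c' = if r' = r ∧ c' = c then i + 1 else T.entry r' c'

/-- The cover relation of the crystal order: `T ⋖ F i T` whenever `F i T ≠ 0`. -/
def CrystalCover (n : ℕ) (lam : ℕ → ℕ) (T T' : Tableau n lam) : Prop :=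
  ∃ i, 1 ≤ i ∧ i ≤ n ∧ FRel n lam i T T'

/-- The crystal order on `B_λ^n`: the reflexive-transitive closure of the relations
`T < F i T`. -/
def CrystalLE (n : ℕ) (lam : ℕ → ℕ) : Tableau n lam → Tableau n lam → Prop :=
  Relation.ReflTransGen (CrystalCover n lam)

/-- `B_λ^n` is a lattice: every pair of tableaux has a greatest lower bound and a least
upper bound with respect to the crystal order. -/
def IsCrystalLattice (n : ℕ) (lam : ℕ → ℕ) : Prop :=
  ∀ T₁ T₂ : Tableau n lam,
    (∃ M, CrystalLE n lam M T₁ ∧ CrystalLE n lam M T₂ ∧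
      ∀ X, CrystalLE n lam X T₁ → CrystalLE n lam X T₂ → CrystalLE n lam X M) ∧
    (∃ J, CrystalLE n lam T₁ J ∧ CrystalLE n lam T₂ J ∧
      ∀ X, CrystalLE n lam T₁ X → CrystalLE n lam T₂ X → CrystalLE n lam J X)


namespace Crys

variable (lam : ℕ → ℕ) (E : ℕ → ℕ → ℕ)

/-- Row `r` of the cell list. -/
def rowE (r : ℕ) : List ((ℕ × ℕ) × ℕ) :=
  (List.range (lam r)).map fun j => ((r, j + 1), E r (j + 1))

/-- Rows `r, r-1, …, 1` concatenated. -/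
def tailE : ℕ → List ((ℕ × ℕ) × ℕ)
  | 0 => []
  | r + 1 => rowE lam E (r + 1) ++ tailE r

lemma tailE_succ (r : ℕ) : tailE lam E (r + 1) = rowE lam E (r + 1) ++ tailE lam E r := rfl

lemma tailE_of_pos {r : ℕ} (hr : 1 ≤ r) :
    tailE lam E r = rowE lam E r ++ tailE lam E (r - 1) := by
  obtain ⟨s, rfl⟩ := Nat.exists_eq_add_of_le hr
  simp [tailE_succ, Nat.add_comm]

lemma length_rowE (r : ℕ) : (rowE lam E r).length = lam r := by simp [rowE]

lemma readingList_eq (N : ℕ) (T : Tableau N lam) :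
    readingList N lam T = tailE lam T.entry N := by
  suffices h : ∀ (m : ℕ),
      ((List.range m).map fun k =>
        (List.range (lam (m - k))).map fun j =>
          ((m - k, j + 1), T.entry (m - k) (j + 1))).flatten = tailE lam T.entry m by
    exact h N
  intro m
  induction m with
  | zero => simp [tailE]
  | succ m ih =>
    rw [List.range_succ_eq_map]
    simp only [List.map_cons, List.map_map, List.flatten_cons, Nat.sub_zero]
    rw [tailE_succ, ← ih]
    congr 1
    congr 1
    apply List.map_congr_left
    intro k hk
    simp only [Function.comp_apply, Nat.succ_eq_add_one]
    have h2 : m + 1 - (k + 1) = m - k := by omega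
    rw [h2]

lemma drop_append_right {α : Type*} {l1 l2 : List α} {q : ℕ} (h : l1.length ≤ q) :
    (l1 ++ l2).drop q = l2.drop (q - l1.length) := by
  rw [List.drop_append]
  simp [List.drop_eq_nil_of_le h]

lemma tailE_stable : ∀ {m M : ℕ}, m ≤ M → (∀ s, m < s → lam s = 0) →
    tailE lam E M = tailE lam E m := by
  intro m M
  induction M with
  | zero => intro h _; rw [Nat.le_zero.mp h]
  | succ M ih =>
    intro h h0
    rcases Nat.eq_or_lt_of_le h with h' | h'
    · rw [h']
    · rw [tailE_succ, ih (by omega) h0]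
      have : lam (M + 1) = 0 := h0 _ (by omega)
      simp [rowE, this]

lemma length_tailE_mono : ∀ {r s : ℕ}, r ≤ s →
    (tailE lam E r).length ≤ (tailE lam E s).length := by
  intro r s
  induction s with
  | zero => intro h; rw [Nat.le_zero.mp h]
  | succ s ih =>
    intro h
    rcases Nat.eq_or_lt_of_le h with h' | h'
    · rw [h']
    · calc (tailE lam E r).length ≤ (tailE lam E s).length := ih (by omega)
        _ ≤ _ := by rw [tailE_succ]; simp

/-- Structure of an element at index `q` of `tailE`. -/
lemma tailE_get {m q : ℕ} {x : (ℕ × ℕ) × ℕ} (h : (tailE lam E m)[q]? = some x) :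
    ∃ r c, x = ((r, c), E r c) ∧ 1 ≤ r ∧ r ≤ m ∧ 1 ≤ c ∧ c ≤ lam r ∧
      (tailE lam E m).drop q = (rowE lam E r).drop (c - 1) ++ tailE lam E (r - 1) ∧
      q + (lam r - (c - 1)) + (tailE lam E (r - 1)).length = (tailE lam E m).length := by
  induction m generalizing q with
  | zero => simp [tailE] at h
  | succ m ih =>
    rw [tailE_succ] at h
    rcases Nat.lt_or_ge q (lam (m + 1)) with hq | hq
    · have hq' : q < (rowE lam E (m + 1)).length := by rwa [length_rowE]
      rw [List.getElem?_append_left hq'] at h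
      have hval : (rowE lam E (m + 1))[q]? = some ((m + 1, q + 1), E (m + 1) (q + 1)) := by
        simp [rowE, List.getElem?_map, List.getElem?_range hq]
      rw [hval] at h
      refine ⟨m + 1, q + 1, (Option.some_injective _ h).symm, by omega, le_refl _, by omega,
        by omega, ?_, ?_⟩
      · rw [tailE_succ, List.drop_append_of_le_length (by rw [length_rowE]; omega)]
        simp
      · rw [tailE_succ]
        simp only [List.length_append, length_rowE]
        simp only [Nat.add_sub_cancel]
        omega
    · have hlen : (rowE lam E (m + 1)).length ≤ q := by rwa [length_rowE]
      rw [List.getElem?_append_right hlen] at h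
      rw [length_rowE] at h
      obtain ⟨r, c, hx, hr1, hrm, hc1, hc, hdrop, harith⟩ := ih h
      refine ⟨r, c, hx, hr1, by omega, hc1, hc, ?_, ?_⟩
      · rw [tailE_succ, drop_append_right (by rw [length_rowE]; omega)]
        rw [length_rowE]
        convert hdrop using 3
      · rw [tailE_succ]
        simp only [List.length_append, length_rowE]
        omega

/-- The index of cell `(r, c)`. -/
lemma tailE_idx {m r c : ℕ} (hr1 : 1 ≤ r) (hrm : r ≤ m) (hc1 : 1 ≤ c) (hc : c ≤ lam r) :
    ∃ q, (tailE lam E m).drop q = (rowE lam E r).drop (c - 1) ++ tailE lam E (r - 1) ∧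
      q + (lam r - (c - 1)) + (tailE lam E (r - 1)).length = (tailE lam E m).length := by
  induction m with
  | zero => omega
  | succ m ih =>
    rcases Nat.eq_or_lt_of_le hrm with h' | h'
    · subst h'
      refine ⟨c - 1, ?_, ?_⟩
      · rw [tailE_succ, List.drop_append_of_le_length (by rw [length_rowE]; omega)]
        rfl
      · rw [tailE_succ]
        simp only [List.length_append, length_rowE]
        have h1 : tailE lam E (m + 1 - 1) = tailE lam E m := rfl
        rw [h1]
        omega
    · obtain ⟨q, hdrop, harith⟩ := ih (by omega)
      refine ⟨lam (m + 1) + q, ?_, ?_⟩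
      · rw [tailE_succ, drop_append_right (by rw [length_rowE]; omega)]
        rw [length_rowE]
        simpa using hdrop
      · rw [tailE_succ]
        simp only [List.length_append, length_rowE]
        omega

end Crys

namespace Crys

lemma Tableau.ext' {N : ℕ} {lam : ℕ → ℕ} {T T' : Tableau N lam} (h : T.entry = T'.entry) :
    T = T' := by
  cases T; cases T'; simp_all

variable {lam : ℕ → ℕ}

lemma lam_anti (hanti : ∀ i, 1 ≤ i → lam (i + 1) ≤ lam i) :
    ∀ {a b : ℕ}, 1 ≤ a → a ≤ b → lam b ≤ lam a := by
  intro a b ha hab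
  induction b with
  | zero => omega
  | succ b ih =>
    rcases Nat.eq_or_lt_of_le hab with h | h
    · rw [h]
    · exact le_trans (hanti b (by omega)) (ih (by omega))

lemma row_mono {N : ℕ} (T : Tableau N lam) {r c1 c2 : ℕ} (hr : 1 ≤ r) (h1 : 1 ≤ c1)
    (h12 : c1 ≤ c2) (h2 : c2 ≤ lam r) : T.entry r c1 ≤ T.entry r c2 := by
  induction c2 with
  | zero => omega
  | succ c2 ih =>
    rcases Nat.eq_or_lt_of_le h12 with h | h
    · rw [h]
    · exact le_trans (ih (by omega) (by omega)) (T.row_weak r c2 hr (by omega) h2)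

lemma col_mono {N : ℕ} (T : Tableau N lam) (hanti : ∀ i, 1 ≤ i → lam (i + 1) ≤ lam i)
    {r s c : ℕ} (hr : 1 ≤ r) (hrs : r ≤ s) (hc1 : 1 ≤ c) (hc : c ≤ lam s) :
    T.entry r c + (s - r) ≤ T.entry s c := by
  induction s with
  | zero => omega
  | succ s ih =>
    rcases Nat.eq_or_lt_of_le hrs with h | h
    · rw [h]; omega
    · have hs1 : 1 ≤ s := by omega
      have hcs : c ≤ lam s := le_trans hc (hanti s hs1)
      have h1 := ih (by omega) hcs
      have h2 := T.col_strict s c hs1 hc1 hcs hc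
      omega

lemma countP_range_le {p q : ℕ → Bool} {a b : ℕ} (h : ∀ j, j < a → p j → j < b ∧ q j) :
    (List.range a).countP p ≤ (List.range b).countP q := by
  rcases le_or_gt a b with hab | hab
  · calc (List.range a).countP p ≤ (List.range a).countP q := by
          apply List.countP_mono_left
          intro x hx hp
          exact (h x (List.mem_range.mp hx) hp).2
      _ ≤ (List.range b).countP q :=
          List.Sublist.countP_le (p := q) (List.range_sublist.mpr hab)
  · have hsplit : List.range a = List.range b ++ (List.range (a - b)).map (b + ·) := by
      rw [← List.range_add]; congr 1; omega
    rw [hsplit, List.countP_append]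
    have h0 : ((List.range (a - b)).map (b + ·)).countP p = 0 := by
      rw [List.countP_eq_zero]
      intro x hx
      simp only [List.mem_map, List.mem_range] at hx
      obtain ⟨j, _, rfl⟩ := hx
      intro hp
      have := h (b + j) (by omega) hp
      omega
    rw [h0, Nat.add_zero]
    apply List.countP_mono_left
    intro x hx hp
    exact (h x (by have := List.mem_range.mp hx; omega) hp).2

lemma count_map_eq_countP (f : ℕ → ℕ) (l : List ℕ) (x : ℕ) :
    (l.map f).count x = l.countP (fun a => f a == x) := by
  rw [List.count_eq_countP, List.countP_map]
  rfl

/-- If no `)` is unmatched, every prefix has at most as many `i`'s as `(i+1)`'s. -/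
lemma prefix_count_of_no_unmatched {i : ℕ} {w : List ℕ}
    (h : ∀ p, ¬ UnmatchedClose i w p) (m : ℕ) :
    (w.take m).count i ≤ (w.take m).count (i + 1) := by
  by_contra hc
  push_neg at hc
  have hex : ∃ m, (w.take m).count (i + 1) < (w.take m).count i := ⟨m, hc⟩
  obtain ⟨m0, hm0, hmin0⟩ : ∃ m0, (w.take m0).count (i + 1) < (w.take m0).count i ∧
      ∀ j, j < m0 → ¬ ((w.take j).count (i + 1) < (w.take j).count i) :=
    ⟨Nat.find hex, Nat.find_spec hex, fun j hj => Nat.find_min hex hj⟩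
  have hmin : ∀ j, j < m0 → (w.take j).count i ≤ (w.take j).count (i + 1) := by
    intro j hj
    have := hmin0 j hj
    omega
  have h1 : 1 ≤ m0 := by
    rcases Nat.eq_zero_or_pos m0 with h' | h'
    · rw [h'] at hm0; simp at hm0
    · exact h'
  have hlen : m0 ≤ w.length := by
    by_contra hl
    push_neg at hl
    have heq : w.take m0 = w.take w.length := by
      rw [List.take_of_length_le (le_of_lt hl), List.take_length]
    have := hmin w.length hl
    rw [← heq] at this
    omega
  set p := m0 - 1 with hpdef
  have hplen : p < w.length := by omega
  have hsplit1 : w.take m0 = w.take p ++ [w[p]] := by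
    have : w.take m0 = w.take p ++ (w.drop p).take 1 := by
      rw [← List.take_add]; congr 1; omega
    rw [this, List.drop_eq_getElem_cons hplen]
    rfl
  have hx : w[p] = i := by
    by_contra hne
    have hmp := hmin p (by omega)
    rw [hsplit1] at hm0
    simp only [List.count_append] at hm0
    have hci : List.count i [w[p]] = 0 := by
      simp [List.count_singleton]
      intro hh; exact hne (by omega)
    have hci1 : List.count (i+1) [w[p]] ≤ 1 := by
      have := List.count_le_length (a := i+1) (l := [w[p]])
      simpa using this
    omega
  apply h p
  constructor
  · rw [List.getElem?_eq_getElem hplen, hx]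
  · intro j hj
    have hj' : j < m0 := by omega
    have hsplit : w.take m0 = w.take j ++ seg w j p := by
      unfold seg
      rw [← List.take_add]; congr 1; omega
    have hmj := hmin j hj'
    rw [hsplit] at hm0
    simp only [List.count_append] at hm0
    omega

end Crys

namespace Crys

/-- Height of column `c`. -/
def ht (N : ℕ) (lam : ℕ → ℕ) (c : ℕ) : ℕ :=
  ((Finset.Ioc 0 N).filter (fun r => c ≤ lam r)).card

variable {N : ℕ} {lam : ℕ → ℕ}

lemma ht_le (c : ℕ) : ht N lam c ≤ N := by
  have h := Finset.card_filter_le (Finset.Ioc 0 N) (fun r => c ≤ lam r)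
  simpa [Nat.card_Ioc, ht] using h

lemma ht_anti {c c' : ℕ} (h : c ≤ c') : ht N lam c' ≤ ht N lam c := by
  apply Finset.card_le_card
  intro x hx
  simp only [Finset.mem_filter, Finset.mem_Ioc] at hx ⊢
  omega

lemma ht_lt_imp {c c' : ℕ} (h : ht N lam c < ht N lam c') : c' < c := by
  by_contra hcc
  push_neg at hcc
  exact absurd (ht_anti (lam := lam) (N := N) hcc) (by omega)

lemma le_ht (hanti : ∀ i, 1 ≤ i → lam (i + 1) ≤ lam i) (hbd : ∀ i, N < i → lam i = 0)
    {r c : ℕ} (hr : 1 ≤ r) (hc1 : 1 ≤ c) (hc : c ≤ lam r) : r ≤ ht N lam c := by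
  have hrN : r ≤ N := by
    by_contra hh
    push_neg at hh
    have := hbd r hh
    omega
  have hsub : Finset.Ioc 0 r ⊆ (Finset.Ioc 0 N).filter (fun t => c ≤ lam t) := by
    intro t htm
    simp only [Finset.mem_Ioc] at htm
    simp only [Finset.mem_filter, Finset.mem_Ioc]
    refine ⟨⟨htm.1, by omega⟩, le_trans hc (lam_anti hanti (by omega) htm.2)⟩
  have := Finset.card_le_card hsub
  simpa [Nat.card_Ioc, ht] using this

lemma lam_ht (hanti : ∀ i, 1 ≤ i → lam (i + 1) ≤ lam i) (hbd : ∀ i, N < i → lam i = 0)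
    {r c : ℕ} (hr : 1 ≤ r) (hc1 : 1 ≤ c) (hc : c ≤ lam r) : c ≤ lam (ht N lam c) := by
  set S := (Finset.Ioc 0 N).filter (fun t => c ≤ lam t) with hS
  have hrN : r ≤ N := by
    by_contra hh
    push_neg at hh
    have := hbd r hh
    omega
  have hrS : r ∈ S := by
    simp only [hS, Finset.mem_filter, Finset.mem_Ioc]
    exact ⟨⟨by omega, hrN⟩, hc⟩
  have hne : S.Nonempty := ⟨r, hrS⟩
  set M := S.max' hne with hM
  have hMS : M ∈ S := S.max'_mem hne
  have hMfacts : 0 < M ∧ M ≤ N ∧ c ≤ lam M := by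
    have := hMS
    simp only [hS, Finset.mem_filter, Finset.mem_Ioc] at this
    exact ⟨this.1.1, this.1.2, this.2⟩
  have hSeq : S = Finset.Ioc 0 M := by
    apply Finset.Subset.antisymm
    · intro t htS
      simp only [Finset.mem_Ioc]
      have h1 : t ≤ M := Finset.le_max' S t htS
      have h2 : 0 < t := by
        have := htS
        simp only [hS, Finset.mem_filter, Finset.mem_Ioc] at this
        exact this.1.1
      exact ⟨h2, h1⟩
    · intro t htm
      simp only [Finset.mem_Ioc] at htm
      simp only [hS, Finset.mem_filter, Finset.mem_Ioc]
      refine ⟨⟨htm.1, by omega⟩, le_trans hMfacts.2.2 (lam_anti hanti htm.1 htm.2)⟩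
  have hcard : ht N lam c = M := by
    rw [ht, ← hS, hSeq, Nat.card_Ioc]
    omega
  rw [hcard]
  exact hMfacts.2.2

/-- The upper bound `T.entry r c ≤ N + 1 - ht c + r` valid in any SSYT. -/
lemma entry_le_val {T : Tableau N lam} (hanti : ∀ i, 1 ≤ i → lam (i + 1) ≤ lam i)
    (hbd : ∀ i, N < i → lam i = 0) {r c : ℕ} (hr : 1 ≤ r) (hc1 : 1 ≤ c) (hc : c ≤ lam r) :
    T.entry r c ≤ N + 1 - ht N lam c + r := by
  set s := ht N lam c with hs
  have hrs : r ≤ s := le_ht hanti hbd hr hc1 hc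
  have hcs : c ≤ lam s := lam_ht hanti hbd hr hc1 hc
  have h1 := col_mono T hanti hr hrs hc1 hcs
  have h2 := T.entry_le s c (by omega) hc1 hcs
  have h3 : s ≤ N := ht_le c
  omega

/-- Entries of the lowest-weight tableau. -/
def Xent (N : ℕ) (lam : ℕ → ℕ) : ℕ → ℕ → ℕ := fun r c =>
  if 1 ≤ r ∧ 1 ≤ c ∧ c ≤ lam r then N + 1 - ht N lam c + r else 0

/-- The lowest-weight tableau of shape `lam` in `B^N`. -/
def XT (N : ℕ) (lam : ℕ → ℕ) (hanti : ∀ i, 1 ≤ i → lam (i + 1) ≤ lam i)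
    (hbd : ∀ i, N < i → lam i = 0) : Tableau N lam where
  entry := Xent N lam
  entry_pos := by
    intro r c hr hc1 hc
    rw [Xent, if_pos ⟨hr, hc1, hc⟩]
    have := ht_le (N := N) (lam := lam) c
    omega
  entry_le := by
    intro r c hr hc1 hc
    rw [Xent, if_pos ⟨hr, hc1, hc⟩]
    have h1 := le_ht hanti hbd hr hc1 hc
    have h2 := ht_le (N := N) (lam := lam) c
    omega
  row_weak := by
    intro r c hr hc1 hc
    rw [Xent, Xent, if_pos ⟨hr, hc1, by omega⟩, if_pos ⟨hr, by omega, hc⟩]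
    have h1 : ht N lam (c + 1) ≤ ht N lam c := ht_anti (by omega)
    have h2 := ht_le (N := N) (lam := lam) c
    have h3 := le_ht hanti hbd hr (by omega : (1:ℕ) ≤ c + 1) hc
    omega
  col_strict := by
    intro r c hr hc1 hc hc'
    rw [Xent, Xent, if_pos ⟨hr, hc1, hc⟩, if_pos ⟨by omega, hc1, hc'⟩]
    have h2 := ht_le (N := N) (lam := lam) c
    omega
  zero_outside := by
    intro r c h
    rw [Xent, if_neg]
    rintro ⟨h1, h2, h3⟩
    rcases h with h | h | h <;> omega

/-- Row count splitting for the reading word. -/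
lemma count_tailW (E : ℕ → ℕ → ℕ) (x : ℕ) : ∀ m : ℕ,
    ((tailE lam E m).map Prod.snd).count x =
      ∑ r' ∈ Finset.Ioc 0 m, ((rowE lam E r').map Prod.snd).count x := by
  intro m
  induction m with
  | zero => simp [tailE]
  | succ m ih =>
    rw [tailE_succ, List.map_append, List.count_append, ih,
      Finset.sum_Ioc_succ_top (by omega)]
    omega

lemma sum_Ioc_shift_le (g h : ℕ → ℕ) (a : ℕ) : ∀ b : ℕ, a ≤ b →
    (∀ x, a < x → x ≤ b → g x ≤ h (x - 1)) →
    ∑ x ∈ Finset.Ioc a b, g x ≤ ∑ x ∈ Finset.Ico a b, h x := by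
  intro b
  induction b with
  | zero => intro hab _; interval_cases a; simp
  | succ b ih =>
    intro hab key
    rcases Nat.eq_or_lt_of_le hab with h' | h'
    · rw [h']; simp
    · have hab' : a ≤ b := by omega
      rw [Finset.sum_Ioc_succ_top hab', Finset.sum_Ico_succ_top hab']
      have h1 := ih hab' (fun x hx hxb => key x hx (by omega))
      have h2 : g (b + 1) ≤ h b := by
        have := key (b + 1) (by omega) (le_refl _)
        simpa using this
      omega

lemma sum_Ico_le_head_add (h : ℕ → ℕ) (a b : ℕ) (hab : a ≤ b) :
    ∑ x ∈ Finset.Ico a b, h x ≤ h a + ∑ x ∈ Finset.Ioc a b, h x := by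
  have h1 : ∑ x ∈ Finset.Ico a b, h x ≤ ∑ x ∈ Finset.Icc a b, h x :=
    Finset.sum_le_sum_of_subset Finset.Ico_subset_Icc_self
  rw [Finset.Icc_eq_cons_Ioc hab, Finset.sum_cons] at h1
  exact h1

end Crys

namespace Crys

variable {N : ℕ} {lam : ℕ → ℕ}

lemma entries_forced (hanti : ∀ i, 1 ≤ i → lam (i + 1) ≤ lam i)
    (hbd : ∀ i, N < i → lam i = 0) (T : Tableau N lam)
    (hno : ∀ i, 1 ≤ i → i ≤ N → ∀ p, ¬ UnmatchedClose i (word N lam T) p) :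
    ∀ r, 1 ≤ r → ∀ c, 1 ≤ c → c ≤ lam r → T.entry r c = N + 1 - ht N lam c + r := by
  have main : ∀ d : ℕ, ∀ r, 1 ≤ r → N ≤ r + d → ∀ c, 1 ≤ c → c ≤ lam r →
      T.entry r c = N + 1 - ht N lam c + r := by
    intro d
    induction d using Nat.strong_induction_on with
    | _ d ihd =>
    intro r hr hNd
    have IHrow : ∀ r', r < r' → ∀ c', 1 ≤ c' → c' ≤ lam r' →
        T.entry r' c' = N + 1 - ht N lam c' + r' := by
      intro r' hrr' c' hc1 hc'
      rcases le_or_gt r' N with hN' | hN'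
      · exact ihd (d - 1) (by omega) r' (by omega) (by omega) c' hc1 hc'
      · exfalso; have := hbd r' hN'; omega
    intro c
    induction c using Nat.strong_induction_on with
    | _ c ihc =>
    intro hc1 hc
    have hrN : r ≤ N := by
      by_contra hh; push_neg at hh; have := hbd r hh; omega
    by_contra hne
    have hub := entry_le_val (T := T) hanti hbd hr hc1 hc
    have hlt : T.entry r c < N + 1 - ht N lam c + r := by omega
    set v := T.entry r c with hv
    have hv1 : 1 ≤ v := T.entry_pos r c hr hc1 hc
    have hrht : r ≤ ht N lam c := le_ht hanti hbd hr hc1 hc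
    have hhtN : ht N lam c ≤ N := ht_le c
    have hvN : v ≤ N := by omega
    obtain ⟨q0, hdrop, harith⟩ := tailE_idx lam T.entry (m := N) hr hrN hc1 hc
    have hword : word N lam T = (tailE lam T.entry N).map Prod.snd := by
      rw [word, readingList_eq]
    have hclen : c - 1 < (rowE lam T.entry r).length := by rw [length_rowE]; omega
    have hrowdrop : (rowE lam T.entry r).drop (c - 1) =
        ((r, c), T.entry r c) :: (rowE lam T.entry r).drop c := by
      rw [List.drop_eq_getElem_cons hclen]
      congr 1
      · have h1 : (rowE lam T.entry r)[c-1]? = some ((r, c - 1 + 1), T.entry r (c - 1 + 1)) := by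
          rw [rowE, List.getElem?_map, List.getElem?_range (by rw [length_rowE] at hclen; omega)]
          rfl
        have h2 : c - 1 + 1 = c := by omega
        rw [h2] at h1
        rw [List.getElem?_eq_getElem hclen] at h1
        exact Option.some_injective _ h1
      · congr 1; omega
    have hcount : ∀ x : ℕ, ((word N lam T).take (q0 + 1)).count x =
        (∑ r' ∈ Finset.Ioc r N, ((rowE lam T.entry r').map Prod.snd).count x)
        + ((((rowE lam T.entry r).map Prod.snd).take (c - 1)).count x)
        + (if v = x then 1 else 0) := by
      intro x
      have hdropw : (word N lam T).drop q0 =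
          ((rowE lam T.entry r).drop (c - 1) ++ tailE lam T.entry (r - 1)).map Prod.snd := by
        rw [hword, ← List.map_drop, hdrop]
      have e5 : (word N lam T).take (q0 + 1) = (word N lam T).take q0 ++ [v] := by
        have h1 : (word N lam T).take (q0 + 1) =
            (word N lam T).take q0 ++ ((word N lam T).drop q0).take 1 := by
          rw [← List.take_add]
        rw [h1, hdropw, hrowdrop]
        simp [hv]
      have e1 : (word N lam T).count x = ((word N lam T).take q0).count x
          + (((rowE lam T.entry r).drop (c - 1)).map Prod.snd).count x
          + ((tailE lam T.entry (r - 1)).map Prod.snd).count x := by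
        conv_lhs => rw [← List.take_append_drop q0 (word N lam T)]
        rw [List.count_append, hdropw, List.map_append, List.count_append]
        omega
      have e2 : (word N lam T).count x =
          (∑ r' ∈ Finset.Ioc 0 (r - 1), ((rowE lam T.entry r').map Prod.snd).count x)
          + ((rowE lam T.entry r).map Prod.snd).count x
          + (∑ r' ∈ Finset.Ioc r N, ((rowE lam T.entry r').map Prod.snd).count x) := by
        rw [hword, count_tailW]
        have hs1 : (∑ r' ∈ Finset.Ioc 0 r, ((rowE lam T.entry r').map Prod.snd).count x)
            + (∑ r' ∈ Finset.Ioc r N, ((rowE lam T.entry r').map Prod.snd).count x)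
            = ∑ r' ∈ Finset.Ioc 0 N, ((rowE lam T.entry r').map Prod.snd).count x :=
          Finset.sum_Ioc_consecutive _ (by omega) hrN
        have hs2 : (∑ r' ∈ Finset.Ioc 0 r, ((rowE lam T.entry r').map Prod.snd).count x)
            = (∑ r' ∈ Finset.Ioc 0 (r - 1), ((rowE lam T.entry r').map Prod.snd).count x)
            + ((rowE lam T.entry r).map Prod.snd).count x := by
          conv_lhs => rw [show r = r - 1 + 1 from by omega]
          rw [Finset.sum_Ioc_succ_top (by omega)]
          rw [show r - 1 + 1 = r from by omega]
        omega
      have e3 : ((rowE lam T.entry r).map Prod.snd).count x =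
          ((((rowE lam T.entry r).map Prod.snd).take (c - 1)).count x)
          + (((rowE lam T.entry r).drop (c - 1)).map Prod.snd).count x := by
        conv_lhs => rw [← List.take_append_drop (c - 1) ((rowE lam T.entry r).map Prod.snd)]
        rw [List.count_append, List.map_drop]
      have e4 : ((tailE lam T.entry (r - 1)).map Prod.snd).count x =
          ∑ r' ∈ Finset.Ioc 0 (r - 1), ((rowE lam T.entry r').map Prod.snd).count x :=
        count_tailW T.entry x (r - 1)
      have e6 : ((word N lam T).take (q0 + 1)).count x =
          ((word N lam T).take q0).count x + (if v = x then 1 else 0) := by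
        rw [e5, List.count_append]
        by_cases h : v = x <;> simp [h, List.count_singleton]
      omega
    have hpref := prefix_count_of_no_unmatched (hno v hv1 hvN) (q0 + 1)
    rw [hcount v, hcount (v + 1), if_pos rfl, if_neg (by omega : ¬ v = v + 1)] at hpref
    have hrowmap : ∀ s : ℕ, (rowE lam T.entry s).map Prod.snd =
        (List.range (lam s)).map (fun j => T.entry s (j + 1)) := by
      intro s
      simp [rowE, List.map_map, Function.comp]
    have htakerow : ((rowE lam T.entry r).map Prod.snd).take (c - 1) =
        (List.range (c - 1)).map (fun j => T.entry r (j + 1)) := by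
      rw [hrowmap, ← List.map_take, List.take_range]
      congr 2
      omega
    have hcnt_take : ∀ x : ℕ, (((rowE lam T.entry r).map Prod.snd).take (c - 1)).count x =
        (List.range (c - 1)).countP (fun j => T.entry r (j + 1) == x) := by
      intro x
      rw [htakerow, count_map_eq_countP]
    have hz : (List.range (c - 1)).countP (fun j => T.entry r (j + 1) == (v + 1)) = 0 := by
      rw [List.countP_eq_zero]
      intro j hj
      simp only [List.mem_range] at hj
      have := row_mono T hr (by omega : 1 ≤ j + 1) (by omega : j + 1 ≤ c) hc
      simp only [beq_iff_eq]
      omega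
    have hCrow : ∀ r', r < r' → r' ≤ N → ∀ x : ℕ,
        ((rowE lam T.entry r').map Prod.snd).count x =
        (List.range (lam r')).countP (fun j => ((N + 1 - ht N lam (j + 1) + r' : ℕ) == x)) := by
      intro r' hrr' hrN' x
      rw [hrowmap, count_map_eq_countP]
      apply List.countP_congr
      intro j hj
      simp only [List.mem_range] at hj
      rw [IHrow r' hrr' (j + 1) (by omega) (by omega)]
    have hsumv : ∑ r' ∈ Finset.Ioc r N, ((rowE lam T.entry r').map Prod.snd).count v
        = ∑ r' ∈ Finset.Ioc r N,
            (List.range (lam r')).countP (fun j => ((N + 1 - ht N lam (j + 1) + r' : ℕ) == v)) := by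
      apply Finset.sum_congr rfl
      intro r' hr'
      simp only [Finset.mem_Ioc] at hr'
      exact hCrow r' hr'.1 hr'.2 v
    have hsumv1 : ∑ r' ∈ Finset.Ioc r N, ((rowE lam T.entry r').map Prod.snd).count (v + 1)
        = ∑ r' ∈ Finset.Ioc r N,
            (List.range (lam r')).countP (fun j => ((N + 1 - ht N lam (j + 1) + r' : ℕ) == (v + 1))) := by
      apply Finset.sum_congr rfl
      intro r' hr'
      simp only [Finset.mem_Ioc] at hr'
      exact hCrow r' hr'.1 hr'.2 (v + 1)
    rw [hsumv, hsumv1, hcnt_take v, hcnt_take (v + 1), hz] at hpref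
    set CP : ℕ → ℕ → ℕ :=
      fun x r' => (List.range (lam r')).countP (fun j => ((N + 1 - ht N lam (j + 1) + r' : ℕ) == x))
      with hCP
    set Hr : ℕ := (List.range (c - 1)).countP (fun j => T.entry r (j + 1) == v) with hHr
    have key1 : ∀ x, r + 1 < x → x ≤ N → CP (v + 1) x ≤ CP v (x - 1) := by
      intro x h1 h2
      apply countP_range_le
      intro j hj hp
      rw [beq_iff_eq] at hp
      have hhj := ht_le (N := N) (lam := lam) (j + 1)
      have hlam : lam x ≤ lam (x - 1) := lam_anti hanti (by omega) (by omega)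
      refine ⟨by omega, ?_⟩
      rw [beq_iff_eq]
      omega
    have key2 : CP (v + 1) (r + 1) ≤ Hr := by
      apply countP_range_le
      intro j hj hp
      rw [beq_iff_eq] at hp
      have hhj := ht_le (N := N) (lam := lam) (j + 1)
      have hgt : ht N lam c < ht N lam (j + 1) := by omega
      have hjc : j + 1 < c := ht_lt_imp hgt
      refine ⟨by omega, ?_⟩
      rw [beq_iff_eq]
      rw [ihc (j + 1) (by omega) (by omega) (by omega : j + 1 ≤ lam r)]
      omega
    have hmono : ∑ r' ∈ Finset.Ioc r N, CP (v + 1) r' ≤ Hr + ∑ r' ∈ Finset.Ioc r N, CP v r' := by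
      set hfun : ℕ → ℕ := fun x => if x = r then Hr else CP v x with hhf
      have hfr : hfun r = Hr := by rw [hhf]; simp
      have hfother : ∀ x, x ≠ r → hfun x = CP v x := by
        intro x hx; rw [hhf]; simp [hx]
      have h1 := sum_Ioc_shift_le (CP (v + 1)) hfun r N hrN (by
          intro x hx hxN
          by_cases hxr : x = r + 1
          · subst hxr
            rw [Nat.add_sub_cancel, hfr]
            exact key2
          · rw [hfother (x - 1) (by omega)]
            exact key1 x (by omega) hxN)
      have h2 := sum_Ico_le_head_add hfun r N hrN
      rw [hfr] at h2
      have h3 : ∑ x ∈ Finset.Ioc r N, hfun x = ∑ x ∈ Finset.Ioc r N, CP v x := by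
        apply Finset.sum_congr rfl
        intro x hx
        simp only [Finset.mem_Ioc] at hx
        exact hfother x (by omega)
      omega
    simp only [hCP] at hmono
    omega
  intro r hr c hc1 hc
  exact main N r hr (by omega) c hc1 hc

end Crys

namespace Crys

variable {N : ℕ} {lam : ℕ → ℕ}

lemma countP_range_le_sub {p : ℕ → Bool} {c k : ℕ}
    (h : ∀ j, j < c → p j = true → k ≤ j) : (List.range c).countP p ≤ c - k := by
  rcases le_or_gt k c with hkc | hkc
  · have hsplit : List.range c = List.range k ++ (List.range (c - k)).map (k + ·) := by
      rw [← List.range_add]; congr 1; omega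
    rw [hsplit, List.countP_append]
    have h0 : (List.range k).countP p = 0 := by
      rw [List.countP_eq_zero]
      intro j hj
      simp only [List.mem_range] at hj
      intro hp
      have := h j (by omega) hp
      omega
    have h1 := List.countP_le_length (p := p) (l := (List.range (c - k)).map (k + ·))
    simp only [List.length_map, List.length_range] at h1
    omega
  · have h0 : (List.range c).countP p = 0 := by
      rw [List.countP_eq_zero]
      intro j hj
      simp only [List.mem_range] at hj
      intro hp
      have := h j hj hp
      omega
    omega

lemma mem_drop_range {n k j : ℕ} (h : j ∈ (List.range n).drop k) : k ≤ j ∧ j < n := by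
  rw [List.mem_iff_getElem] at h
  obtain ⟨m, hm, hj⟩ := h
  rw [List.getElem_drop, List.getElem_range] at hj
  simp only [List.length_drop, List.length_range] at hm
  omega

lemma mem_take_drop_range {n k t j : ℕ} (h : j ∈ ((List.range n).drop k).take t) :
    k ≤ j ∧ j < k + t ∧ j < n := by
  rw [List.mem_iff_getElem] at h
  obtain ⟨m, hm, hj⟩ := h
  rw [List.getElem_take, List.getElem_drop, List.getElem_range] at hj
  simp only [List.length_take, List.length_drop, List.length_range] at hm
  omega

lemma rowE_get (E : ℕ → ℕ → ℕ) {r j : ℕ} (h : j < lam r) :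
    (rowE lam E r)[j]? = some ((r, j + 1), E r (j + 1)) := by
  rw [rowE, List.getElem?_map, List.getElem?_range h]
  rfl

/-- The main step lemma: from an unmatched close we can build the image of `F i`. -/
lemma step_exists (hanti : ∀ i, 1 ≤ i → lam (i + 1) ≤ lam i)
    (hbd : ∀ i, N < i → lam i = 0) (T : Tableau N lam) {i p1 : ℕ}
    (hi1 : 1 ≤ i) (hiN : i ≤ N) (hp1 : UnmatchedClose i (word N lam T) p1) :
    ∃ T' : Tableau N lam, FRel N lam i T T' ∧
      ∃ r c, 1 ≤ r ∧ 1 ≤ c ∧ c ≤ lam r ∧ T.entry r c = i ∧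
        ∀ r' c', T'.entry r' c' = if r' = r ∧ c' = c then i + 1 else T.entry r' c' := by
  classical
  have hword : word N lam T = (tailE lam T.entry N).map Prod.snd := by
    rw [word, readingList_eq]
  have hlenb : ∀ q, UnmatchedClose i (word N lam T) q → q < (word N lam T).length := by
    intro q hq
    by_contra hh
    push_neg at hh
    have := List.getElem?_eq_none hh
    rw [hq.1] at this
    simp at this
  set p := Nat.findGreatest (fun q => UnmatchedClose i (word N lam T) q)
    (word N lam T).length with hpdef
  have hpU : UnmatchedClose i (word N lam T) p :=
    Nat.findGreatest_spec (le_of_lt (hlenb p1 hp1)) hp1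
  have hpmax : ∀ q, p < q → ¬ UnmatchedClose i (word N lam T) q := by
    intro q hq hUq
    rcases le_or_gt q (word N lam T).length with hle | hle
    · exact Nat.findGreatest_is_greatest hq hle hUq
    · exact absurd (hlenb q hUq) (by omega)
  have hplen : p < (word N lam T).length := hlenb p hpU
  have hwp := hpU.1
  obtain ⟨x, hx, hx2⟩ : ∃ x, (tailE lam T.entry N)[p]? = some x ∧ x.2 = i := by
    rw [hword, List.getElem?_map] at hwp
    cases hxx : (tailE lam T.entry N)[p]? with
    | none => rw [hxx] at hwp; simp at hwp
    | some y =>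
      rw [hxx] at hwp
      simp only [Option.map_some] at hwp
      exact ⟨y, rfl, Option.some_injective _ hwp⟩
  obtain ⟨r, c, hxeq, hr1, hrN, hc1, hc, hdropP, harithP⟩ := tailE_get lam T.entry hx
  have hErc : T.entry r c = i := by rw [hxeq] at hx2; exact hx2
  -- Claim A : the entry to the right cannot be `i`.
  have claimA : ∀ hc' : c + 1 ≤ lam r, i + 1 ≤ T.entry r (c + 1) := by
    intro hc'
    have hge : i ≤ T.entry r (c + 1) := by
      have := T.row_weak r c hr1 hc1 hc'
      omega
    rcases Nat.eq_or_lt_of_le hge with heq | h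
    swap
    · omega
    exfalso
    -- entry r (c+1) = i; show unmatched at p+1
    have hdw : (word N lam T).drop p =
        ((rowE lam T.entry r).drop (c - 1) ++ tailE lam T.entry (r - 1)).map Prod.snd := by
      rw [hword, ← List.map_drop, hdropP]
    have h1 : c - 1 < (rowE lam T.entry r).length := by rw [length_rowE]; omega
    have h2 : c < (rowE lam T.entry r).length := by rw [length_rowE]; omega
    have hd1 : (rowE lam T.entry r).drop (c - 1) =
        ((r, c), i) :: (rowE lam T.entry r).drop c := by
      rw [List.drop_eq_getElem_cons h1]
      congr 1
      · have := rowE_get (lam := lam) T.entry (r := r) (j := c - 1) (by omega)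
        rw [List.getElem?_eq_getElem h1] at this
        have h3 := Option.some_injective _ this
        rw [h3]
        have h4 : c - 1 + 1 = c := by omega
        rw [h4, hErc]
      · congr 1; omega
    have hd2 : (rowE lam T.entry r).drop c =
        ((r, c + 1), T.entry r (c + 1)) :: (rowE lam T.entry r).drop (c + 1) := by
      rw [List.drop_eq_getElem_cons h2]
      congr 1
      have := rowE_get (lam := lam) T.entry (r := r) (j := c) (by omega)
      rw [List.getElem?_eq_getElem h2] at this
      exact Option.some_injective _ this
    have hwp1 : (word N lam T)[p + 1]? = some i := by
      have : (word N lam T)[p + 1]? = ((word N lam T).drop p)[1]? := by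
        rw [List.getElem?_drop]
      rw [this, hdw, hd1, hd2]
      simp [← heq]
    have hp1len : p + 1 < (word N lam T).length := by
      rcases List.getElem?_eq_some_iff.mp hwp1 with ⟨hh, _⟩
      exact hh
    apply hpmax (p + 1) (by omega)
    constructor
    · exact hwp1
    · intro j hj
      have hdropsucc : (word N lam T).drop (p + 1) =
          i :: (word N lam T).drop (p + 2) := by
        rw [List.drop_eq_getElem_cons hp1len]
        congr 1
        rcases List.getElem?_eq_some_iff.mp hwp1 with ⟨hh, hv⟩
        exact hv
      rcases Nat.lt_or_ge j (p + 1) with hjp | hjp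
      · have hjp' : j ≤ p := by omega
        have hseg : seg (word N lam T) j (p + 1) = seg (word N lam T) j p ++ [i] := by
          unfold seg
          have e1 : p + 1 + 1 - j = (p + 1 - j) + 1 := by omega
          rw [e1, List.take_add]
          congr 1
          rw [List.drop_drop]
          have e2 : j + (p + 1 - j) = p + 1 := by omega
          rw [e2, hdropsucc]
          rfl
        rw [hseg, List.count_append, List.count_append]
        have := hpU.2 j hjp'
        have c1 : List.count i [i] = 1 := by simp
        have c2 : List.count (i + 1) [i] = 0 := by simp
        omega
      · have hjp' : j = p + 1 := by omega
        subst hjp'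
        have hseg : seg (word N lam T) (p + 1) (p + 1) = [i] := by
          unfold seg
          have e1 : p + 1 + 1 - (p + 1) = 1 := by omega
          rw [e1, hdropsucc]
          rfl
        rw [hseg]
        simp
  -- Claim B : the entry below must exceed `i+1`.
  have claimB : ∀ hcr1 : c ≤ lam (r + 1), i + 2 ≤ T.entry (r + 1) c := by
    intro hcr1
    have hgt : i < T.entry (r + 1) c := by
      have := T.col_strict r c hr1 hc1 hc hcr1
      omega
    by_contra hh
    push_neg at hh
    have heq : T.entry (r + 1) c = i + 1 := by omega
    have hexa : ∃ a, 1 ≤ a ∧ a ≤ c ∧ T.entry r a = i := ⟨c, hc1, le_refl c, hErc⟩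
    obtain ⟨a, ⟨ha1, hac, hEa⟩, hamin⟩ :
        ∃ a, (1 ≤ a ∧ a ≤ c ∧ T.entry r a = i) ∧
          ∀ b, b < a → ¬(1 ≤ b ∧ b ≤ c ∧ T.entry r b = i) :=
      ⟨Nat.find hexa, Nat.find_spec hexa, fun b hb => Nat.find_min hexa hb⟩
    have hr1N : r + 1 ≤ N := by
      by_contra hhh
      push_neg at hhh
      have := hbd (r + 1) hhh
      omega
    obtain ⟨q, hdropQ, harithQ⟩ :=
      tailE_idx lam T.entry (m := N) (r := r + 1) (c := a) (by omega) hr1N ha1 (by omega)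
    have hlr : (tailE lam T.entry r).length =
        lam r + (tailE lam T.entry (r - 1)).length := by
      rw [tailE_of_pos lam T.entry hr1]
      simp [length_rowE]
    have hQsimp : tailE lam T.entry (r + 1 - 1) = tailE lam T.entry r := by norm_num
    rw [hQsimp] at harithQ
    have hqp : q ≤ p := by omega
    have hqp2 : p + 1 - q = (lam (r + 1) - (a - 1)) + c := by omega
    have hsegQ : seg (word N lam T) q p =
        ((rowE lam T.entry (r + 1)).drop (a - 1)).map Prod.snd
          ++ ((rowE lam T.entry r).map Prod.snd).take c := by
      unfold seg
      rw [hword, ← List.map_drop, hdropQ, hQsimp, hqp2, List.map_append]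
      have hlenA : (((rowE lam T.entry (r + 1)).drop (a - 1)).map Prod.snd).length =
          lam (r + 1) - (a - 1) := by
        simp [length_rowE]
      rw [List.take_append]
      congr 1
      · apply List.take_of_length_le
        omega
      · rw [hlenA]
        have e1 : lam (r + 1) - (a - 1) + c - (lam (r + 1) - (a - 1)) = c := by omega
        rw [e1, tailE_of_pos lam T.entry hr1, List.map_append,
          List.take_append_of_le_length (by simp [length_rowE]; omega)]
    -- entry bounds in row r+1
    have hrowvals : ∀ j, a - 1 ≤ j → j < lam (r + 1) → i + 1 ≤ T.entry (r + 1) (j + 1) := by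
      intro j hj1 hj2
      have h0 : i + 1 ≤ T.entry (r + 1) a := by
        have := T.col_strict r a hr1 ha1 (by omega) (by omega)
        omega
      have := row_mono (r := r + 1) T (by omega) ha1 (by omega) (by omega : j + 1 ≤ lam (r + 1))
      omega
    have hrowvals2 : ∀ j, a - 1 ≤ j → j + 1 ≤ c → T.entry (r + 1) (j + 1) = i + 1 := by
      intro j hj1 hj2
      have h1 := hrowvals j hj1 (by omega)
      have h2 : T.entry (r + 1) (j + 1) ≤ T.entry (r + 1) c :=
        row_mono (r := r + 1) T (by omega) (by omega) hj2 hcr1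
      omega
    -- counts
    have hA' : ((rowE lam T.entry (r + 1)).drop (a - 1)).map Prod.snd =
        ((List.range (lam (r + 1))).drop (a - 1)).map (fun j => T.entry (r + 1) (j + 1)) := by
      rw [rowE, ← List.map_drop, List.map_map]
      rfl
    have hAi : (((rowE lam T.entry (r + 1)).drop (a - 1)).map Prod.snd).count i = 0 := by
      rw [hA', List.count_eq_zero]
      intro hmem
      rw [List.mem_map] at hmem
      obtain ⟨j, hj, hij⟩ := hmem
      obtain ⟨hj1, hj2⟩ := mem_drop_range hj
      have := hrowvals j hj1 hj2
      omega
    have hAi1 : c - (a - 1) ≤ (((rowE lam T.entry (r + 1)).drop (a - 1)).map Prod.snd).count (i + 1) := by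
      rw [hA']
      have hsub : List.Sublist ((((List.range (lam (r + 1))).drop (a - 1)).take (c - (a - 1))).map
          (fun j => T.entry (r + 1) (j + 1)))
          (((List.range (lam (r + 1))).drop (a - 1)).map (fun j => T.entry (r + 1) (j + 1))) :=
        List.Sublist.map _ (List.take_sublist _ _)
      have hlen : ((((List.range (lam (r + 1))).drop (a - 1)).take (c - (a - 1))).map
          (fun j => T.entry (r + 1) (j + 1))).length = c - (a - 1) := by
        simp only [List.length_map, List.length_take, List.length_drop, List.length_range]
        omega
      have hall : (((((List.range (lam (r + 1))).drop (a - 1)).take (c - (a - 1))).map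
          (fun j => T.entry (r + 1) (j + 1)))).count (i + 1) =
          (((((List.range (lam (r + 1))).drop (a - 1)).take (c - (a - 1))).map
          (fun j => T.entry (r + 1) (j + 1)))).length := by
        rw [List.count_eq_length]
        intro b hb
        rw [List.mem_map] at hb
        obtain ⟨j, hj, hij⟩ := hb
        obtain ⟨hj1, hj2, hj3⟩ := mem_take_drop_range hj
        rw [← hij]
        rw [hrowvals2 j hj1 (by omega)]
      calc c - (a - 1) = _ := hlen.symm
        _ = _ := hall.symm
        _ ≤ _ := List.Sublist.count_le _ hsub
    have hBmap : ((rowE lam T.entry r).map Prod.snd).take c =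
        (List.range c).map (fun j => T.entry r (j + 1)) := by
      rw [rowE, List.map_map, ← List.map_take, List.take_range]
      have : c ⊓ lam r = c := by omega
      rw [this]
      rfl
    have hBi1 : (((rowE lam T.entry r).map Prod.snd).take c).count (i + 1) = 0 := by
      rw [hBmap, List.count_eq_zero]
      intro hmem
      rw [List.mem_map] at hmem
      obtain ⟨j, hj, hij⟩ := hmem
      rw [List.mem_range] at hj
      have : T.entry r (j + 1) ≤ i := by
        have := row_mono T hr1 (by omega : 1 ≤ j + 1) (by omega : j + 1 ≤ c) hc
        omega
      omega
    have hBi : (((rowE lam T.entry r).map Prod.snd).take c).count i ≤ c - (a - 1) := by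
      rw [hBmap, count_map_eq_countP]
      apply countP_range_le_sub
      intro j hj hp'
      rw [beq_iff_eq] at hp'
      by_contra hja
      push_neg at hja
      exact hamin (j + 1) (by omega) ⟨by omega, by omega, hp'⟩
    have hcnt := hpU.2 q hqp
    rw [hsegQ, List.count_append, List.count_append] at hcnt
    omega
  -- Build T'
  refine ⟨⟨fun r' c' => if r' = r ∧ c' = c then i + 1 else T.entry r' c',
    ?_, ?_, ?_, ?_, ?_⟩, ⟨p, hpU, hpmax, r, c, ?_, fun r' c' => rfl⟩,
    r, c, hr1, hc1, hc, hErc, fun r' c' => rfl⟩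
  · intro r' c' h1 h2 h3
    split_ifs with h
    · omega
    · exact T.entry_pos r' c' h1 h2 h3
  · intro r' c' h1 h2 h3
    split_ifs with h
    · omega
    · exact T.entry_le r' c' h1 h2 h3
  · intro r' j h1 h2 h3
    by_cases ha : r' = r ∧ j = c
    · obtain ⟨rfl, rfl⟩ := ha
      rw [if_pos ⟨rfl, rfl⟩, if_neg (by omega)]
      exact claimA h3
    · rw [if_neg ha]
      by_cases hb : r' = r ∧ j + 1 = c
      · obtain ⟨rfl, hb2⟩ := hb
        rw [if_pos ⟨rfl, hb2⟩]
        have h4 := T.row_weak r' j h1 h2 h3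
        have h5 : T.entry r' (j + 1) = i := by rw [hb2, hErc]
        omega
      · rw [if_neg hb]
        exact T.row_weak r' j h1 h2 h3
  · intro r' j h1 h2 h3 h4
    by_cases ha : r' = r ∧ j = c
    · obtain ⟨rfl, rfl⟩ := ha
      rw [if_pos ⟨rfl, rfl⟩, if_neg (by omega)]
      have := claimB h4
      omega
    · rw [if_neg ha]
      by_cases hb : r' + 1 = r ∧ j = c
      · obtain ⟨hb1, rfl⟩ := hb
        rw [if_pos ⟨hb1, rfl⟩]
        have h5 := T.col_strict r' j h1 h2 h3 h4
        have h6 : T.entry (r' + 1) j = i := by rw [hb1, hErc]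
        omega
      · rw [if_neg hb]
        exact T.col_strict r' j h1 h2 h3 h4
  · intro r' c' h
    rw [if_neg]
    · exact T.zero_outside r' c' h
    · rintro ⟨rfl, rfl⟩
      rcases h with h | h | h <;> omega
  · rw [readingList_eq]
    rw [hxeq, hErc] at hx
    exact hx

end Crys

namespace Crys

variable {N : ℕ} {lam : ℕ → ℕ}

/-- Total sum of entries. -/
def sumT (N : ℕ) (lam : ℕ → ℕ) (T : Tableau N lam) : ℕ :=
  ∑ r ∈ Finset.Ioc 0 N, ∑ c ∈ Finset.Ioc 0 (lam r), T.entry r c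

lemma sumT_le (T : Tableau N lam) :
    sumT N lam T ≤ ∑ r ∈ Finset.Ioc 0 N, lam r * (N + 1) := by
  apply Finset.sum_le_sum
  intro r hr
  simp only [Finset.mem_Ioc] at hr
  have h := Finset.sum_le_card_nsmul (Finset.Ioc 0 (lam r)) (fun c => T.entry r c) (N + 1)
    (by
      intro c hcm
      simp only [Finset.mem_Ioc] at hcm
      exact T.entry_le r c (by omega) (by omega) hcm.2)
  simpa [Nat.card_Ioc, smul_eq_mul] using h

lemma sumT_step {T T' : Tableau N lam} {i r c : ℕ}
    (hr1 : 1 ≤ r) (hrN : r ≤ N) (hc1 : 1 ≤ c) (hc : c ≤ lam r) (hErc : T.entry r c = i)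
    (hent : ∀ r' c', T'.entry r' c' = if r' = r ∧ c' = c then i + 1 else T.entry r' c') :
    sumT N lam T' = sumT N lam T + 1 := by
  have hinner : ∀ r' ∈ Finset.Ioc 0 N,
      (∑ c' ∈ Finset.Ioc 0 (lam r'), T'.entry r' c') =
      (∑ c' ∈ Finset.Ioc 0 (lam r'), T.entry r' c') + (if r' = r then 1 else 0) := by
    intro r' _
    by_cases hr' : r' = r
    · subst hr'
      rw [if_pos rfl]
      have hcong : ∀ c' ∈ Finset.Ioc 0 (lam r'),
          T'.entry r' c' = T.entry r' c' + (if c' = c then 1 else 0) := by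
        intro c' _
        rw [hent]
        by_cases hc' : c' = c
        · subst hc'
          rw [if_pos ⟨rfl, rfl⟩, if_pos rfl, hErc]
        · rw [if_neg (by tauto), if_neg hc']
          omega
      rw [Finset.sum_congr rfl hcong, Finset.sum_add_distrib]
      congr 1
      rw [Finset.sum_ite_eq' (Finset.Ioc 0 (lam r')) c (fun _ => 1)]
      rw [if_pos (by simp only [Finset.mem_Ioc]; omega)]
    · rw [if_neg hr', Nat.add_zero]
      apply Finset.sum_congr rfl
      intro c' _
      rw [hent, if_neg (by tauto)]
  rw [sumT, Finset.sum_congr rfl hinner, Finset.sum_add_distrib]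
  congr 1
  rw [Finset.sum_ite_eq' (Finset.Ioc 0 N) r (fun _ => 1)]
  rw [if_pos (by simp only [Finset.mem_Ioc]; omega)]

lemma cover_mono {T T' : Tableau N lam} (h : CrystalCover N lam T T') :
    ∀ r c, T.entry r c ≤ T'.entry r c := by
  obtain ⟨i, hi1, hiN, p, hU, hmax, r0, c0, hget, hent⟩ := h
  have hget' : (tailE lam T.entry N)[p]? = some ((r0, c0), i) := by
    rw [← readingList_eq]; exact hget
  obtain ⟨r1, c1, hxeq, _, _, _, _, _, _⟩ := tailE_get lam T.entry hget'
  have hrc : T.entry r0 c0 = i := by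
    simp only [Prod.mk.injEq] at hxeq
    obtain ⟨⟨ha, hb⟩, hcv⟩ := hxeq
    rw [ha, hb]
    exact hcv.symm
  intro r c
  rw [hent]
  split_ifs with h'
  · obtain ⟨rfl, rfl⟩ := h'
    rw [hrc]
    omega
  · exact le_refl _

lemma le_mono {T T' : Tableau N lam} (h : CrystalLE N lam T T') :
    ∀ r c, T.entry r c ≤ T'.entry r c := by
  induction h with
  | refl => intro r c; exact le_refl _
  | tail _ hbc ih => intro r c; exact le_trans (ih r c) (cover_mono hbc r c)

/-- Climbing to the lowest-weight tableau. -/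
lemma le_XT (hanti : ∀ i, 1 ≤ i → lam (i + 1) ≤ lam i) (hbd : ∀ i, N < i → lam i = 0)
    (T : Tableau N lam) : CrystalLE N lam T (XT N lam hanti hbd) := by
  classical
  set X := XT N lam hanti hbd with hX
  set bound := ∑ r ∈ Finset.Ioc 0 N, lam r * (N + 1) with hbound
  suffices h : ∀ k, ∀ T : Tableau N lam, bound ≤ sumT N lam T + k → CrystalLE N lam T X by
    exact h bound T (by omega)
  intro k
  induction k using Nat.strong_induction_on with
  | _ k ihk =>
  intro T hk
  by_cases hno : ∀ i, 1 ≤ i → i ≤ N → ∀ p, ¬ UnmatchedClose i (word N lam T) p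
  · have hforced := entries_forced hanti hbd T hno
    have hent : T.entry = X.entry := by
      funext r c
      by_cases hin : 1 ≤ r ∧ 1 ≤ c ∧ c ≤ lam r
      · rw [hforced r hin.1 c hin.2.1 hin.2.2, hX]
        show _ = Xent N lam r c
        rw [Xent, if_pos hin]
      · have h0 : T.entry r c = 0 := T.zero_outside r c (by omega)
        have h1 : X.entry r c = 0 := X.zero_outside r c (by omega)
        rw [h0, h1]
    exact Tableau.ext' hent ▸ Relation.ReflTransGen.refl
  · push_neg at hno
    obtain ⟨i, hi1, hiN, p1, hp1⟩ := hno
    obtain ⟨T', hF, r, c, hr1, hc1, hclam, hErc, hent⟩ :=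
      step_exists hanti hbd T hi1 hiN hp1
    have hrN : r ≤ N := by
      by_contra hh
      push_neg at hh
      have := hbd r hh
      omega
    have hsum : sumT N lam T' = sumT N lam T + 1 :=
      sumT_step hr1 hrN hc1 hclam hErc hent
    have hb := sumT_le T'
    have hk1 : 1 ≤ k := by omega
    exact Relation.ReflTransGen.head ⟨i, hi1, hiN, hF⟩ (ihk (k - 1) (by omega) T' (by omega))

/-- Transfer of reading data between ranks. -/
lemma readingList_transfer {N N' n0 : ℕ} (hN : n0 ≤ N) (hN' : n0 ≤ N')
    (hbd : ∀ s, n0 < s → lam s = 0) (T : Tableau N lam) (S : Tableau N' lam)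
    (hTS : S.entry = T.entry) : readingList N' lam S = readingList N lam T := by
  rw [readingList_eq, readingList_eq, hTS, tailE_stable lam T.entry hN' hbd,
    tailE_stable lam T.entry hN hbd]

lemma FRel_transfer {N N' n0 : ℕ} (hN : n0 ≤ N) (hN' : n0 ≤ N')
    (hbd : ∀ s, n0 < s → lam s = 0) (T T' : Tableau N lam) (S S' : Tableau N' lam)
    (hS : S.entry = T.entry) (hS' : S'.entry = T'.entry) (i : ℕ) :
    FRel N lam i T T' ↔ FRel N' lam i S S' := by
  have hrl : readingList N' lam S = readingList N lam T :=
    readingList_transfer hN hN' hbd T S hS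
  have hw : word N' lam S = word N lam T := by
    rw [word, word, hrl]
  unfold FRel
  rw [hrl, hw, hS', hS]

end Crys

/-- For `n' ≥ n`, the crystal `B_λ^n` is order-isomorphic to a principal
order ideal of `B_λ^{n'}`, namely the set of tableaux of shape `λ` with all entries at
most `n+1`; consequently, if `B_λ^n` is not a lattice then neither is `B_λ^{n'}`. -/
theorem larger_n_principal_ideal (n n' : ℕ) (hnn : n ≤ n') (lam : ℕ → ℕ)
    (hanti : ∀ i, 1 ≤ i → lam (i + 1) ≤ lam i)
    (hbd : ∀ i, n < i → lam i = 0) :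
    (∃ (X : Tableau n' lam) (φ : Tableau n lam → Tableau n' lam),
      (∀ T, (φ T).entry = T.entry) ∧
      Function.Injective φ ∧
      Set.range φ =
        {S : Tableau n' lam | ∀ i j, 1 ≤ i → 1 ≤ j → j ≤ lam i → S.entry i j ≤ n + 1} ∧
      Set.range φ = {S : Tableau n' lam | CrystalLE n' lam S X} ∧
      (∀ T T', CrystalLE n lam T T' ↔ CrystalLE n' lam (φ T) (φ T'))) ∧
    (¬ IsCrystalLattice n lam → ¬ IsCrystalLattice n' lam) := by
  classical
  set φ : Tableau n lam → Tableau n' lam := fun T =>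
    ⟨T.entry, T.entry_pos,
      fun i j h1 h2 h3 => le_trans (T.entry_le i j h1 h2 h3) (by omega),
      T.row_weak, T.col_strict, T.zero_outside⟩ with hφ
  have hφe : ∀ T, (φ T).entry = T.entry := fun T => rfl
  have hinj : Function.Injective φ := by
    intro T1 T2 h
    have h2 : (φ T1).entry = (φ T2).entry := congrArg Tableau.entry h
    exact Crys.Tableau.ext' h2
  have hlift : ∀ S : Tableau n' lam,
      (∀ i j, 1 ≤ i → 1 ≤ j → j ≤ lam i → S.entry i j ≤ n + 1) → ∃ T, φ T = S := by
    intro S hS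
    refine ⟨⟨S.entry, S.entry_pos, hS, S.row_weak, S.col_strict, S.zero_outside⟩, ?_⟩
    exact Crys.Tableau.ext' rfl
  have hcov_fwd : ∀ T T' : Tableau n lam, CrystalCover n lam T T' →
      CrystalCover n' lam (φ T) (φ T') := by
    rintro T T' ⟨i, h1, h2, hF⟩
    exact ⟨i, h1, by omega,
      (Crys.FRel_transfer (le_refl n) hnn hbd T T' (φ T) (φ T') (hφe T) (hφe T') i).mp hF⟩
  have hfwd : ∀ T T' : Tableau n lam, CrystalLE n lam T T' →
      CrystalLE n' lam (φ T) (φ T') := by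
    intro T T' h
    induction h with
    | refl => exact Relation.ReflTransGen.refl
    | tail hab hbc ih => exact Relation.ReflTransGen.tail ih (hcov_fwd _ _ hbc)
  have hcov_bwd : ∀ T0 T'' : Tableau n lam, CrystalCover n' lam (φ T0) (φ T'') →
      CrystalCover n lam T0 T'' := by
    rintro T0 T'' ⟨i, h1, h2, hF⟩
    have hiN : i ≤ n := by
      obtain ⟨p, hU, hmax, r, c, hget, hent⟩ := hF
      have hget' : (Crys.tailE lam (φ T0).entry n')[p]? = some ((r, c), i) := by
        rw [← Crys.readingList_eq]; exact hget
      obtain ⟨r1, c1, hxeq, hr1, hrN, hc1, hclam, _, _⟩ := Crys.tailE_get lam (φ T0).entry hget'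
      simp only [Prod.mk.injEq] at hxeq
      obtain ⟨⟨ha, hb⟩, hcv⟩ := hxeq
      have h3 : T''.entry r c = i + 1 := by
        have := hent r c
        rw [if_pos ⟨rfl, rfl⟩] at this
        exact this
      have h4 := T''.entry_le r c (by omega) (by omega) (by rw [ha, hb]; exact hclam)
      omega
    exact ⟨i, h1, hiN,
      (Crys.FRel_transfer (le_refl n) hnn hbd T0 T'' (φ T0) (φ T'') rfl rfl i).mpr hF⟩
  have hbwd : ∀ (T : Tableau n lam) (S : Tableau n' lam), CrystalLE n' lam (φ T) S →
      ∀ T'', φ T'' = S → CrystalLE n lam T T'' := by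
    intro T S h
    induction h with
    | refl =>
      intro T'' hT''
      have h2 : T'' = T := hinj hT''
      rw [h2]
      exact Relation.ReflTransGen.refl
    | @tail b c hab hbc ih =>
      intro T'' hT''
      subst hT''
      have hb_le : ∀ r c0, b.entry r c0 ≤ (φ T'').entry r c0 := Crys.cover_mono hbc
      obtain ⟨T0, hT0⟩ := hlift b (fun i j h1 h2 h3 =>
        le_trans (hb_le i j) (T''.entry_le i j h1 h2 h3))
      have ih0 := ih T0 hT0
      have hcov : CrystalCover n lam T0 T'' := hcov_bwd T0 T'' (by rw [hT0]; exact hbc)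
      exact Relation.ReflTransGen.tail ih0 hcov
  set X0 := Crys.XT n lam hanti hbd with hX0
  set X := φ X0 with hX
  have hle_X : ∀ T : Tableau n lam, CrystalLE n' lam (φ T) X :=
    fun T => hfwd T X0 (Crys.le_XT hanti hbd T)
  have hset1 : Set.range φ =
      {S : Tableau n' lam | ∀ i j, 1 ≤ i → 1 ≤ j → j ≤ lam i → S.entry i j ≤ n + 1} := by
    ext S
    constructor
    · rintro ⟨T, rfl⟩ i j h1 h2 h3
      exact T.entry_le i j h1 h2 h3
    · intro hS
      obtain ⟨T, hT⟩ := hlift S hS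
      exact ⟨T, hT⟩
  have hset2 : Set.range φ = {S : Tableau n' lam | CrystalLE n' lam S X} := by
    ext S
    constructor
    · rintro ⟨T, rfl⟩
      exact hle_X T
    · intro hS
      rw [hset1]
      intro i j h1 h2 h3
      have h4 := Crys.le_mono hS i j
      have h5 : X.entry i j ≤ n + 1 := X0.entry_le i j h1 h2 h3
      omega
  have hiso : ∀ T T', CrystalLE n lam T T' ↔ CrystalLE n' lam (φ T) (φ T') :=
    fun T T' => ⟨hfwd T T', fun h => hbwd T (φ T') h T' rfl⟩
  constructor
  · exact ⟨X, φ, hφe, hinj, hset1, hset2, hiso⟩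
  · intro hn hlat'
    apply hn
    intro T1 T2
    obtain ⟨⟨M, hM1, hM2, hMg⟩, ⟨J, hJ1, hJ2, hJl⟩⟩ := hlat' (φ T1) (φ T2)
    have hMX : CrystalLE n' lam M X := Relation.ReflTransGen.trans hM1 (hle_X T1)
    have hMmem : M ∈ Set.range φ := by rw [hset2]; exact hMX
    obtain ⟨M0, hM0⟩ := hMmem
    have hJX : CrystalLE n' lam J X := hJl X (hle_X T1) (hle_X T2)
    have hJmem : J ∈ Set.range φ := by rw [hset2]; exact hJX
    obtain ⟨J0, hJ0⟩ := hJmem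
    constructor
    · refine ⟨M0, ?_, ?_, ?_⟩
      · apply (hiso M0 T1).mpr
        rw [hM0]
        exact hM1
      · apply (hiso M0 T2).mpr
        rw [hM0]
        exact hM2
      · intro Y hY1 hY2
        apply (hiso Y M0).mpr
        rw [hM0]
        exact hMg (φ Y) ((hiso Y T1).mp hY1) ((hiso Y T2).mp hY2)
    · refine ⟨J0, ?_, ?_, ?_⟩
      · apply (hiso T1 J0).mpr
        rw [hJ0]
        exact hJ1
      · apply (hiso T2 J0).mpr
        rw [hJ0]
        exact hJ2
      · intro Y hY1 hY2
        apply (hiso J0 Y).mpr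
        rw [hJ0]
        exact hJl (φ Y) ((hiso T1 Y).mp hY1) ((hiso T2 Y).mp hY2)
end

section
/- For every n ≥ 2 and every k ≥ 1, the type A_n crystal B_{(k,1)}^n (associated to the partition with one part equal to k and one part equal to 1) is a lattice. -/
namespace Hook

/-- range' helpers -/
lemma range'_drop : ∀ (m s nn : ℕ), (List.range' s nn).drop m = List.range' (s+m) (nn-m) := by
  intro m
  induction m with
  | zero => simp
  | succ m ih =>
    intro s nn
    cases nn with
    | zero => simp
    | succ nn =>
      rw [List.range'_succ]
      simp only [List.drop_succ_cons, ih (s+1) nn]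
      congr 1 <;> omega

lemma range'_take : ∀ (m s nn : ℕ), (List.range' s nn).take m = List.range' s (min m nn) := by
  intro m
  induction m with
  | zero => simp
  | succ m ih =>
    intro s nn
    cases nn with
    | zero => simp
    | succ nn =>
      rw [List.range'_succ, List.take_succ_cons, ih (s+1) nn, ← List.range'_succ]
      congr 1; omega

section Fixed
variable {n k : ℕ}

def lam (k : ℕ) : ℕ → ℕ := fun i => if i = 1 then k else if i = 2 then 1 else 0

variable (hn : 2 ≤ n) (hk : 1 ≤ k)

local notation "Tab" => Tableau n (lam k)

def A (T : Tab) (j : ℕ) : ℕ := T.entry 1 j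
def B (T : Tab) : ℕ := T.entry 2 1

lemma lam_one : lam k 1 = k := rfl
lemma lam_two : lam k 2 = 1 := rfl
lemma lam_ge3 {i : ℕ} (h : 3 ≤ i) : lam k i = 0 := by
  simp only [lam]; rw [if_neg (by omega), if_neg (by omega)]

lemma A_pos (T : Tab) {j : ℕ} (h1 : 1 ≤ j) (h2 : j ≤ k) : 1 ≤ A T j :=
  T.entry_pos 1 j le_rfl h1 (by simpa [lam] using h2)
lemma A_le (T : Tab) {j : ℕ} (h1 : 1 ≤ j) (h2 : j ≤ k) : A T j ≤ n + 1 :=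
  T.entry_le 1 j le_rfl h1 (by simpa [lam] using h2)
lemma B_le (T : Tab) : B T ≤ n + 1 :=
  T.entry_le 2 1 (by omega) le_rfl (by simp [lam])
lemma A_lt_B (T : Tab) (hk : 1 ≤ k) : A T 1 < B T :=
  T.col_strict 1 1 le_rfl le_rfl (by simpa [lam] using hk) (by simp [lam])
lemma A_step (T : Tab) {j : ℕ} (h1 : 1 ≤ j) (h2 : j + 1 ≤ k) : A T j ≤ A T (j+1) :=
  T.row_weak 1 j le_rfl h1 (by simpa [lam] using h2)

lemma A_mono (T : Tab) {j j' : ℕ} (h1 : 1 ≤ j) (h : j ≤ j') (h2 : j' ≤ k) :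
    A T j ≤ A T j' := by
  induction j' with
  | zero => omega
  | succ m ih =>
    rcases Nat.eq_or_lt_of_le h with rfl | hlt
    · exact le_rfl
    · exact le_trans (ih (by omega) (by omega)) (A_step T (by omega) h2)

lemma B_pos (T : Tab) (hk : 1 ≤ k) : 2 ≤ B T :=
  lt_of_le_of_lt (A_pos T le_rfl hk) (A_lt_B T hk)

/-- extensionality through the shape -/
lemma tab_ext (hk : 1 ≤ k) {T T' : Tab} (hA : ∀ j, 1 ≤ j → j ≤ k → A T j = A T' j)
    (hB : B T = B T') : T = T' := by
  have he : T.entry = T'.entry := by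
    funext i j
    by_cases hi : 1 ≤ i
    · by_cases hj : 1 ≤ j
      · by_cases hij : j ≤ lam k i
        · by_cases hi1 : i = 1
          · subst hi1; exact hA j hj (by simpa [lam] using hij)
          · by_cases hi2 : i = 2
            · subst hi2
              have : j = 1 := by simp [lam] at hij; omega
              subst this; exact hB
            · have h3 : lam k i = 0 := lam_ge3 (by omega)
              omega
        · rw [T.zero_outside i j (Or.inr (Or.inr (by omega))),
              T'.zero_outside i j (Or.inr (Or.inr (by omega)))]
      · rw [T.zero_outside i j (Or.inr (Or.inl (by omega))),
            T'.zero_outside i j (Or.inr (Or.inl (by omega)))]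
    · rw [T.zero_outside i j (Or.inl (by omega)), T'.zero_outside i j (Or.inl (by omega))]
  cases T; cases T'; simpa using he

/-- builder -/
def mkTab (a : ℕ → ℕ) (b : ℕ) (hk : 1 ≤ k)
    (ha1 : ∀ j, 1 ≤ j → j ≤ k → 1 ≤ a j) (ha2 : ∀ j, 1 ≤ j → j ≤ k → a j ≤ n + 1)
    (hs : ∀ j, 1 ≤ j → j + 1 ≤ k → a j ≤ a (j+1)) (hab : a 1 < b) (hb : b ≤ n + 1) :
    Tab where
  entry i j := if i = 1 ∧ 1 ≤ j ∧ j ≤ k then a j else if i = 2 ∧ j = 1 then b else 0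
  entry_pos i j hi hj hij := by
    by_cases h1 : i = 1
    · subst h1; rw [if_pos ⟨rfl, hj, by simpa [lam] using hij⟩]
      exact ha1 j hj (by simpa [lam] using hij)
    · by_cases h2 : i = 2
      · subst h2
        have : j = 1 := by simp [lam] at hij; omega
        subst this
        rw [if_neg (by simp), if_pos ⟨rfl, rfl⟩]; omega
      · have := lam_ge3 (k := k) (i := i) (by omega); omega
  entry_le i j hi hj hij := by
    by_cases h1 : i = 1
    · subst h1; rw [if_pos ⟨rfl, hj, by simpa [lam] using hij⟩]
      exact ha2 j hj (by simpa [lam] using hij)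
    · by_cases h2 : i = 2
      · subst h2
        have : j = 1 := by simp [lam] at hij; omega
        subst this
        rw [if_neg (by simp), if_pos ⟨rfl, rfl⟩]; exact hb
      · have := lam_ge3 (k := k) (i := i) (by omega); omega
  row_weak i j hi hj hjk := by
    by_cases h1 : i = 1
    · subst h1
      have hjk' : j + 1 ≤ k := by simpa [lam] using hjk
      rw [if_pos ⟨rfl, hj, by omega⟩, if_pos ⟨rfl, by omega, hjk'⟩]
      exact hs j hj hjk'
    · by_cases h2 : i = 2
      · subst h2; simp [lam] at hjk; omega
      · have := lam_ge3 (k := k) (i := i) (by omega); omega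
  col_strict i j hi hj hij hij2 := by
    have h1 : i = 1 := by
      by_contra h1
      by_cases h2 : i = 2
      · subst h2; have := lam_ge3 (k := k) (i := 3) (by omega); simp [this] at hij2; omega
      · have := lam_ge3 (k := k) (i := i) (by omega); omega
    subst h1
    have : j = 1 := by simp [lam] at hij2; omega
    subst this
    rw [if_pos ⟨rfl, le_rfl, hk⟩, if_neg (by simp), if_pos ⟨rfl, rfl⟩]
    exact hab
  zero_outside i j h := by
    rcases h with h | h | h
    · rw [if_neg (by omega), if_neg (by omega)]
    · rw [if_neg (by omega), if_neg (by omega)]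
    · by_cases h1 : i = 1
      · subst h1; simp [lam] at h
        rw [if_neg (by omega), if_neg (by omega)]
      · by_cases h2 : i = 2
        · subst h2; simp [lam] at h
          rw [if_neg (by omega), if_neg (by omega)]
        · rw [if_neg (by omega), if_neg (by omega)]

lemma mkTab_entry (a : ℕ → ℕ) (b : ℕ) (hk : 1 ≤ k) (ha1) (ha2) (hs) (hab) (hb) (i j : ℕ) :
    (mkTab (n := n) a b hk ha1 ha2 hs hab hb).entry i j =
      if i = 1 ∧ 1 ≤ j ∧ j ≤ k then a j else if i = 2 ∧ j = 1 then b else 0 := rfl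

lemma mkTab_A (a : ℕ → ℕ) (b : ℕ) (hk : 1 ≤ k) (ha1) (ha2) (hs) (hab) (hb) {j : ℕ}
    (h1 : 1 ≤ j) (h2 : j ≤ k) : A (mkTab (n := n) a b hk ha1 ha2 hs hab hb) j = a j := by
  rw [A, mkTab_entry, if_pos ⟨rfl, h1, h2⟩]

lemma mkTab_B (a : ℕ → ℕ) (b : ℕ) (hk : 1 ≤ k) (ha1) (ha2) (hs) (hab) (hb) :
    B (mkTab (n := n) a b hk ha1 ha2 hs hab hb) = b := by
  rw [B, mkTab_entry, if_neg (by simp), if_pos ⟨rfl, rfl⟩]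

/-- the reading list of a hook tableau -/
lemma readingList_eq (hn : 2 ≤ n) (T : Tab) :
    readingList n (lam k) T =
      ((2,1), B T) :: (List.range k).map (fun j => ((1, j+1), A T (j+1))) := by
  unfold readingList
  have hsplit : List.range n = List.range (n-2) ++ [n-2, n-2+1] := by
    have : n = (n-2) + 2 := by omega
    rw [this, List.range_add]
    simp [List.range_succ]
  rw [hsplit]
  rw [List.map_append, List.flatten_append]
  have h1 : ((List.range (n-2)).map fun m =>
      (List.range (lam k (n - m))).map fun j => ((n - m, j + 1), T.entry (n - m) (j + 1))).flatten = [] := by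
    rw [List.flatten_eq_nil_iff]
    intro l hl
    rw [List.mem_map] at hl
    obtain ⟨m, hm, rfl⟩ := hl
    rw [List.mem_range] at hm
    have : lam k (n - m) = 0 := lam_ge3 (by omega)
    simp [this]
  rw [h1, List.nil_append]
  have e2 : n - (n-2) = 2 := by omega
  have e1 : n - (n-2+1) = 1 := by omega
  simp only [List.map_cons, List.map_nil, List.flatten_cons, List.flatten_nil, e1, e2]
  rw [lam_two, lam_one]
  simp [List.range_succ, A, B]

lemma word_eq (hn : 2 ≤ n) (T : Tab) :
    word n (lam k) T = B T :: (List.range' 1 k).map (A T) := by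
  unfold word
  rw [readingList_eq hn T]
  simp only [List.map_cons, List.map_map]
  congr 1
  apply List.ext_getElem (by simp)
  intro i h1 h2
  simp only [List.length_map, List.length_range] at h1
  simp only [List.getElem_map, List.getElem_range, List.getElem_range']
  simp [Nat.add_comm]

lemma word_get_zero (hn : 2 ≤ n) (T : Tab) : (word n (lam k) T)[0]? = some (B T) := by
  rw [word_eq hn T, List.getElem?_cons_zero]

lemma word_get_row (hn : 2 ≤ n) (T : Tab) {p : ℕ} (h1 : 1 ≤ p) (h2 : p ≤ k) :
    (word n (lam k) T)[p]? = some (A T p) := by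
  rw [word_eq hn T]
  obtain ⟨q, rfl⟩ : ∃ q, p = q + 1 := ⟨p - 1, by omega⟩
  rw [List.getElem?_cons_succ, List.getElem?_map, List.getElem?_range' (s := 1) (step := 1) (i := q) (n := k) (by simpa using h2)]
  simp [Nat.add_comm]

lemma word_get_high (hn : 2 ≤ n) (T : Tab) {p : ℕ} (h2 : k < p) :
    (word n (lam k) T)[p]? = none := by
  rw [List.getElem?_eq_none_iff]
  rw [word_eq hn T]
  simp only [List.length_cons, List.length_map, List.length_range']
  omega

/-! ### segment and count lemmas -/

lemma seg_row (hn : 2 ≤ n) (T : Tab) {j p : ℕ} (hj : 1 ≤ j) (hjp : j ≤ p) (hp : p ≤ k) :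
    seg (word n (lam k) T) j p = (List.range' j (p+1-j)).map (A T) := by
  rw [word_eq hn T, seg]
  obtain ⟨j', rfl⟩ : ∃ j', j = j' + 1 := ⟨j - 1, by omega⟩
  rw [List.drop_succ_cons, ← List.map_drop, range'_drop, ← List.map_take, range'_take]
  rw [Nat.min_eq_left (by omega)]
  congr 2
  omega

lemma seg_zero (hn : 2 ≤ n) (T : Tab) {p : ℕ} (hp : p ≤ k) :
    seg (word n (lam k) T) 0 p = B T :: (List.range' 1 p).map (A T) := by
  rw [word_eq hn T, seg]
  rw [List.drop_zero, Nat.sub_zero, List.take_succ_cons, ← List.map_take, range'_take]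
  congr 3
  omega

lemma count_range'_eq_zero (T : Tab) {v s m : ℕ}
    (h : ∀ q, s ≤ q → q < s + m → A T q ≠ v) :
    ((List.range' s m).map (A T)).count v = 0 := by
  rw [List.count_eq_zero]
  intro hmem
  rw [List.mem_map] at hmem
  obtain ⟨q, hq, hqv⟩ := hmem
  rw [List.mem_range'] at hq
  obtain ⟨t, ht, rfl⟩ := hq
  exact h _ (by omega) (by omega) hqv

lemma count_range'_ge_one (T : Tab) {v s m q : ℕ} (h1 : s ≤ q) (h2 : q < s + m)
    (h : A T q = v) : 1 ≤ ((List.range' s m).map (A T)).count v :=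
  List.count_pos_iff.mpr (List.mem_map.mpr ⟨q, List.mem_range'.mpr ⟨q - s, by omega, by omega⟩, h⟩)

lemma range'_split (s t u : ℕ) :
    List.range' s (t + u) = List.range' s t ++ List.range' (s + t) u := by
  have := List.range'_append (s := s) (m := t) (n := u) (step := 1)
  simp only [one_mul] at this
  rw [← this]

/-! ### counts in row segments -/

lemma count_row_upper_zero (T : Tab) {j p : ℕ} (hj : 1 ≤ j) (hp : p ≤ k) (hjp : j ≤ p) :
    ((List.range' j (p+1-j)).map (A T)).count (A T p + 1) = 0 := by
  apply count_range'_eq_zero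
  intro q hq1 hq2
  have : A T q ≤ A T p := A_mono T (by omega) (by omega) hp
  omega

lemma count_row_le_one (T : Tab) {p : ℕ} (h1 : 1 ≤ p) (h2 : p ≤ k)
    (h : p = 1 ∨ A T (p-1) < A T p) :
    ((List.range' 1 p).map (A T)).count (A T p) ≤ 1 := by
  have hsplit : List.range' 1 p = List.range' 1 (p-1) ++ List.range' p 1 := by
    have := range'_split 1 (p-1) 1
    rw [show p - 1 + 1 = p by omega, show 1 + (p - 1) = p by omega] at this
    exact this
  rw [hsplit, List.map_append, List.count_append]
  have hc1 : ((List.range' 1 (p-1)).map (A T)).count (A T p) = 0 := by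
    apply count_range'_eq_zero
    intro q hq1 hq2
    rcases h with h | h
    · omega
    · have : A T q ≤ A T (p-1) := A_mono T (by omega) (by omega) (by omega)
      omega
  have hc2 : ((List.range' p 1).map (A T)).count (A T p) = 1 := by
    simp
  omega

lemma count_row_ge_two (T : Tab) {p : ℕ} (h1 : 2 ≤ p) (h2 : p ≤ k)
    (h : A T (p-1) = A T p) :
    2 ≤ ((List.range' 1 p).map (A T)).count (A T p) := by
  have hsplit : List.range' 1 p = List.range' 1 (p-1) ++ List.range' p 1 := by
    have := range'_split 1 (p-1) 1
    rw [show p - 1 + 1 = p by omega, show 1 + (p - 1) = p by omega] at this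
    exact this
  rw [hsplit, List.map_append, List.count_append]
  have hc1 : 1 ≤ ((List.range' 1 (p-1)).map (A T)).count (A T p) :=
    count_range'_ge_one T (q := p-1) (by omega) (by omega) h
  have hc2 : 1 ≤ ((List.range' p 1).map (A T)).count (A T p) :=
    count_range'_ge_one T (q := p) (by omega) (by omega) rfl
  omega

/-! ### characterization of unmatched positions -/

lemma unmatched_zero (hn : 2 ≤ n) (T : Tab) (i : ℕ) :
    UnmatchedClose i (word n (lam k) T) 0 ↔ B T = i := by
  constructor
  · intro h
    have := h.1
    rw [word_get_zero hn T] at this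
    exact Option.some_injective _ this
  · intro hB
    refine ⟨by rw [word_get_zero hn T, hB], ?_⟩
    intro j hj
    have hj0 : j = 0 := by omega
    subst hj0
    have hseg : seg (word n (lam k) T) 0 0 = [B T] := by
      have := seg_zero hn T (p := 0) (by omega)
      simpa using this
    rw [hseg, hB]
    simp

lemma unmatched_row (hn : 2 ≤ n) (T : Tab) {i p : ℕ} (h1 : 1 ≤ p) (h2 : p ≤ k) :
    UnmatchedClose i (word n (lam k) T) p ↔
      (A T p = i ∧ (B T = i + 1 → 2 ≤ p ∧ A T (p-1) = i)) := by
  constructor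
  · intro h
    have hval : A T p = i := by
      have := h.1
      rw [word_get_row hn T h1 h2] at this
      exact Option.some_injective _ this
    refine ⟨hval, fun hB => ?_⟩
    have h0 := h.2 0 (Nat.zero_le p)
    rw [seg_zero hn T h2] at h0
    simp only [List.count_cons, beq_iff_eq] at h0
    have hz : ((List.range' 1 p).map (A T)).count (i+1) = 0 := by
      rw [← hval]; exact count_row_upper_zero T le_rfl h2 h1
    rw [hz, if_pos hB, if_neg (by omega)] at h0
    by_contra hc
    have hle : ((List.range' 1 p).map (A T)).count (A T p) ≤ 1 := by
      apply count_row_le_one T h1 h2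
      by_cases hp1 : p = 1
      · exact Or.inl hp1
      · refine Or.inr ?_
        have hmono : A T (p-1) ≤ A T p := A_mono T (by omega) (by omega) h2
        have : ¬ (2 ≤ p ∧ A T (p-1) = i) := hc
        rcases Nat.lt_or_ge (A T (p-1)) (A T p) with hlt | hge
        · exact hlt
        · exfalso; exact this ⟨by omega, by omega⟩
    rw [hval] at hle
    omega
  · rintro ⟨hval, hcomp⟩
    refine ⟨by rw [word_get_row hn T h1 h2, hval], ?_⟩
    intro j hj
    rcases Nat.eq_zero_or_pos j with rfl | hjp
    · rw [seg_zero hn T h2]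
      simp only [List.count_cons, beq_iff_eq]
      have hz : ((List.range' 1 p).map (A T)).count (i+1) = 0 := by
        rw [← hval]; exact count_row_upper_zero T le_rfl h2 h1
      have h1c : 1 ≤ ((List.range' 1 p).map (A T)).count i :=
        count_range'_ge_one T (q := p) h1 (by omega) hval
      by_cases hB : B T = i + 1
      · obtain ⟨hp2, hcm⟩ := hcomp hB
        have h2c : 2 ≤ ((List.range' 1 p).map (A T)).count i := by
          rw [← hval]
          exact count_row_ge_two T hp2 h2 (by omega)
        rw [hz, if_pos hB, if_neg (by omega)]
        omega
      · rw [hz, if_neg hB]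
        by_cases hBi : B T = i
        · rw [if_pos hBi]; omega
        · rw [if_neg hBi]; omega
    · rw [seg_row hn T hjp hj h2]
      have hz : ((List.range' j (p+1-j)).map (A T)).count (i+1) = 0 := by
        rw [← hval]; exact count_row_upper_zero T hjp h2 hj
      have h1c : 1 ≤ ((List.range' j (p+1-j)).map (A T)).count i :=
        count_range'_ge_one T (q := p) hj (by omega) hval
      omega

lemma unmatched_high (hn : 2 ≤ n) (T : Tab) {i p : ℕ} (h : k < p) :
    ¬ UnmatchedClose i (word n (lam k) T) p := by
  intro h'
  have := h'.1
  rw [word_get_high hn T h] at this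
  cases this

lemma readingList_get_zero (hn : 2 ≤ n) (T : Tab) :
    (readingList n (lam k) T)[0]? = some ((2,1), B T) := by
  rw [readingList_eq hn T, List.getElem?_cons_zero]

lemma readingList_get_row (hn : 2 ≤ n) (T : Tab) {p : ℕ} (h1 : 1 ≤ p) (h2 : p ≤ k) :
    (readingList n (lam k) T)[p]? = some ((1, p), A T p) := by
  rw [readingList_eq hn T]
  obtain ⟨q, rfl⟩ : ∃ q, p = q + 1 := ⟨p - 1, by omega⟩
  rw [List.getElem?_cons_succ, List.getElem?_map, List.getElem?_range (by omega)]
  rfl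

/-! ### the move relation -/

def MoveA (T T' : Tab) (p : ℕ) : Prop :=
  1 ≤ p ∧ p ≤ k ∧ A T p ≤ n ∧ (p = k ∨ A T p < A T (p+1)) ∧
  (B T = A T p + 1 → 2 ≤ p ∧ A T (p-1) = A T p) ∧
  ∀ r' c', T'.entry r' c' = if r' = 1 ∧ c' = p then A T p + 1 else T.entry r' c'

def MoveB (T T' : Tab) : Prop :=
  B T ≤ n ∧ (∀ j, 1 ≤ j → j ≤ k → A T j ≠ B T) ∧
  ∀ r' c', T'.entry r' c' = if r' = 2 ∧ c' = 1 then B T + 1 else T.entry r' c'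

def Move (T T' : Tab) : Prop := (∃ p, MoveA T T' p) ∨ MoveB T T'

lemma cover_iff_move (hn : 2 ≤ n) (hk : 1 ≤ k) (T T' : Tab) :
    CrystalCover n (lam k) T T' ↔ Move T T' := by
  constructor
  · rintro ⟨i, hi1, hi2, p, hum, hmax, r, c, hrc, hupd⟩
    rcases Nat.eq_zero_or_pos p with rfl | hp1
    · -- b-move
      have hB : B T = i := (unmatched_zero hn T i).mp hum
      rw [readingList_get_zero hn T] at hrc
      have hrc' : ((2,1), B T) = ((r, c), i) := Option.some_injective _ hrc
      simp only [Prod.mk.injEq] at hrc'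
      obtain ⟨⟨hr, hc⟩, hBi⟩ := hrc'
      right
      refine ⟨by omega, ?_, ?_⟩
      · intro j hj1 hj2 hAj
        apply hmax j (by omega)
        rw [unmatched_row hn T hj1 hj2]
        exact ⟨by omega, fun habs => absurd habs (by omega)⟩
      · intro r' c'
        rw [hupd r' c', ← hr, ← hc, hB]
    · -- row move
      have hpk : p ≤ k := by
        by_contra hcon
        exact unmatched_high hn T (by omega) hum
      obtain ⟨hval, hcomp⟩ := (unmatched_row hn T hp1 hpk).mp hum
      rw [readingList_get_row hn T hp1 hpk] at hrc
      have hrc' : ((1, p), A T p) = ((r, c), i) := Option.some_injective _ hrc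
      simp only [Prod.mk.injEq] at hrc'
      obtain ⟨⟨hr, hc⟩, hAi⟩ := hrc'
      left
      refine ⟨p, hp1, hpk, by omega, ?_, ?_, ?_⟩
      · rcases Nat.eq_or_lt_of_le hpk with rfl | hlt
        · exact Or.inl rfl
        · refine Or.inr ?_
          have hstep : A T p ≤ A T (p+1) := A_step T hp1 (by omega)
          rcases Nat.lt_or_ge (A T p) (A T (p+1)) with h | h
          · exact h
          · exfalso
            apply hmax (p+1) (by omega)
            rw [unmatched_row hn T (by omega) (by omega)]
            refine ⟨by omega, fun hb => ⟨by omega, by simpa using (by omega : A T p = i)⟩⟩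
      · rw [hval]; intro hb
        obtain ⟨ha', hb'⟩ := hcomp hb
        exact ⟨ha', by omega⟩
      · intro r' c'
        rw [hupd r' c', ← hr, ← hc, hval]
  · intro hmv
    rcases hmv with ⟨p, hp1, hpk, hAn, hright, hcomp, hupd⟩ | ⟨hBn, hnorow, hupd⟩
    · refine ⟨A T p, A_pos T hp1 hpk, hAn, p, ?_, ?_, 1, p, readingList_get_row hn T hp1 hpk, hupd⟩
      · rw [unmatched_row hn T hp1 hpk]
        exact ⟨rfl, hcomp⟩
      · intro q hq
        by_cases hqk : q ≤ k
        · rw [unmatched_row hn T (by omega) hqk]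
          rintro ⟨hval, -⟩
          rcases hright with rfl | hlt
          · omega
          · have : A T (p+1) ≤ A T q := A_mono T (by omega) (by omega) hqk
            omega
        · exact unmatched_high hn T (by omega)
    · refine ⟨B T, by have := B_pos T hk; omega, hBn, 0, (unmatched_zero hn T _).mpr rfl, ?_,
        2, 1, readingList_get_zero hn T, hupd⟩
      intro q hq
      by_cases hqk : q ≤ k
      · rw [unmatched_row hn T (by omega) hqk]
        rintro ⟨hval, -⟩
        exact hnorow q (by omega) hqk hval
      · exact unmatched_high hn T (by omega)

/-! ### the abstract order -/

def Rle (T T' : Tab) : Prop :=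
  (∀ j, 1 ≤ j → j ≤ k → A T j ≤ A T' j) ∧ B T ≤ B T' ∧
  (∀ j, 1 ≤ j → j ≤ k → B T ≤ A T j → B T' ≤ A T' j) ∧
  (∀ j, 1 ≤ j → j ≤ k → A T j < B T → B T' ≤ A T' j → 2 ≤ j ∧ B T - 1 ≤ A T' (j-1))

lemma Rle_refl (T : Tab) : Rle T T :=
  ⟨fun _ _ _ => le_rfl, le_rfl, fun _ _ _ h => h, fun j _ _ h1 h2 => absurd h2 (by omega)⟩

lemma Rle_trans {T T' T'' : Tab} (h : Rle T T') (h' : Rle T' T'') : Rle T T'' := by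
  obtain ⟨p1, b1, c1, d1⟩ := h
  obtain ⟨p2, b2, c2, d2⟩ := h'
  refine ⟨fun j hj1 hj2 => le_trans (p1 j hj1 hj2) (p2 j hj1 hj2), le_trans b1 b2,
    fun j hj1 hj2 hb => c2 j hj1 hj2 (c1 j hj1 hj2 hb), ?_⟩
  intro j hj1 hj2 hlt hge
  by_cases hmid : B T' ≤ A T' j
  · obtain ⟨hj, hcm⟩ := d1 j hj1 hj2 hlt hmid
    have := p2 (j-1) (by omega) (by omega)
    exact ⟨hj, by omega⟩
  · obtain ⟨hj, hcm⟩ := d2 j hj1 hj2 (by omega) hge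
    exact ⟨hj, by omega⟩

lemma moveA_A {T T' : Tab} {p : ℕ}
    (hupd : ∀ r' c', T'.entry r' c' = if r' = 1 ∧ c' = p then A T p + 1 else T.entry r' c')
    (j : ℕ) : A T' j = if j = p then A T p + 1 else A T j := by
  have := hupd 1 j
  simpa [A] using this

lemma moveA_B {T T' : Tab} {p : ℕ} (hp : 1 ≤ p)
    (hupd : ∀ r' c', T'.entry r' c' = if r' = 1 ∧ c' = p then A T p + 1 else T.entry r' c') :
    B T' = B T := by
  have := hupd 2 1
  simpa [B] using this

lemma moveB_A {T T' : Tab}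
    (hupd : ∀ r' c', T'.entry r' c' = if r' = 2 ∧ c' = 1 then B T + 1 else T.entry r' c')
    (j : ℕ) : A T' j = A T j := by
  have := hupd 1 j
  simpa [A] using this

lemma moveB_B {T T' : Tab}
    (hupd : ∀ r' c', T'.entry r' c' = if r' = 2 ∧ c' = 1 then B T + 1 else T.entry r' c') :
    B T' = B T + 1 := by
  have := hupd 2 1
  simpa [B] using this

lemma entry_zero_outside_shape (T : Tab) {r c : ℕ}
    (h1 : ¬(r = 1 ∧ 1 ≤ c ∧ c ≤ k)) (h2 : ¬(r = 2 ∧ c = 1)) : T.entry r c = 0 := by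
  apply T.zero_outside
  by_cases hr0 : r = 0
  · exact Or.inl hr0
  by_cases hc0 : c = 0
  · exact Or.inr (Or.inl hc0)
  refine Or.inr (Or.inr ?_)
  by_cases hr : r = 1
  · subst hr; rw [lam_one]
    have : ¬(1 ≤ c ∧ c ≤ k) := fun hh => h1 ⟨rfl, hh⟩
    omega
  by_cases hr2 : r = 2
  · subst hr2; rw [lam_two]
    have : ¬ c = 1 := fun hh => h2 ⟨rfl, hh⟩
    omega
  · rw [lam_ge3 (by omega)]; omega

lemma move_Rle (hk : 1 ≤ k) {T T' : Tab} (h : Move T T') : Rle T T' := by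
  rcases h with ⟨p, hp1, hpk, hAn, hright, hcomp, hupd⟩ | ⟨hBn, hnorow, hupd⟩
  · have hA' := moveA_A hupd
    have hB' := moveA_B hp1 hupd
    refine ⟨?_, by omega, ?_, ?_⟩
    · intro j hj1 hj2
      rw [hA' j]
      by_cases hjp : j = p
      · rw [if_pos hjp, hjp]; omega
      · rw [if_neg hjp]
    · intro j hj1 hj2 hb
      rw [hA' j, hB']
      by_cases hjp : j = p
      · rw [if_pos hjp]; subst hjp; omega
      · rw [if_neg hjp]; exact hb
    · intro j hj1 hj2 hlt hge
      rw [hB', hA' j] at hge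
      by_cases hjp : j = p
      · subst hjp
        rw [if_pos rfl] at hge
        have hbeq : B T = A T j + 1 := by omega
        obtain ⟨hj2', hcm⟩ := hcomp hbeq
        refine ⟨hj2', ?_⟩
        rw [hA' (j-1), if_neg (by omega)]
        omega
      · rw [if_neg hjp] at hge
        omega
  · have hA' := moveB_A hupd
    have hB' := moveB_B hupd
    refine ⟨fun j hj1 hj2 => (hA' j).ge, by omega, ?_, ?_⟩
    · intro j hj1 hj2 hb
      rw [hA' j, hB']
      have := hnorow j hj1 hj2
      omega
    · intro j hj1 hj2 hlt hge
      rw [hA' j, hB'] at hge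
      omega

lemma LE_Rle (hn : 2 ≤ n) (hk : 1 ≤ k) {T T' : Tab} (h : CrystalLE n (lam k) T T') :
    Rle T T' := by
  induction h with
  | refl => exact Rle_refl T
  | tail h1 h2 ih => exact Rle_trans ih (move_Rle hk ((cover_iff_move hn hk _ _).mp h2))

/-! ### constructing moves -/

lemma bumpRow_exists (hn : 2 ≤ n) (hk : 1 ≤ k) (T : Tab) {p : ℕ} (hp1 : 1 ≤ p) (hpk : p ≤ k)
    (hAn : A T p ≤ n) (hright : p = k ∨ A T p < A T (p+1))
    (hcomp : B T = A T p + 1 → 2 ≤ p ∧ A T (p-1) = A T p) :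
    ∃ T₀ : Tab, MoveA T T₀ p ∧
      (∀ j, A T₀ j = if j = p then A T p + 1 else A T j) ∧ B T₀ = B T := by
  have hab : (if 1 = p then A T p + 1 else A T 1) < B T := by
    by_cases h1p : 1 = p
    · rw [if_pos h1p]
      have h1 : A T 1 < B T := A_lt_B T hk
      rw [← h1p] at hcomp ⊢
      by_cases hbe : B T = A T 1 + 1
      · obtain ⟨h2, -⟩ := hcomp hbe; omega
      · omega
    · rw [if_neg h1p]; exact A_lt_B T hk
  refine ⟨mkTab (fun j => if j = p then A T p + 1 else A T j) (B T) hk ?_ ?_ ?_ hab (B_le T), ?_, ?_, ?_⟩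
  · intro j hj1 hj2
    by_cases hjp : j = p
    · rw [if_pos hjp]; omega
    · rw [if_neg hjp]; exact A_pos T hj1 hj2
  · intro j hj1 hj2
    by_cases hjp : j = p
    · rw [if_pos hjp]; omega
    · rw [if_neg hjp]; exact A_le T hj1 hj2
  · intro j hj1 hj2
    by_cases hjp : j = p
    · rw [if_pos hjp, if_neg (by omega : ¬ j + 1 = p)]
      rcases hright with h | h
      · omega
      · rw [hjp]; omega
    · rw [if_neg hjp]
      by_cases hjp' : j + 1 = p
      · rw [if_pos hjp']
        have : A T j ≤ A T (j+1) := A_step T hj1 hj2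
        rw [← hjp']; omega
      · rw [if_neg hjp']; exact A_step T hj1 hj2
  · refine ⟨hp1, hpk, hAn, hright, hcomp, ?_⟩
    intro r' c'
    rw [mkTab_entry]
    by_cases h1 : r' = 1 ∧ 1 ≤ c' ∧ c' ≤ k
    · rw [if_pos h1]
      obtain ⟨hr, hc1, hc2⟩ := h1
      subst hr
      by_cases hcp : c' = p
      · rw [if_pos hcp, if_pos ⟨rfl, hcp⟩]
      · rw [if_neg hcp, if_neg (fun hh => hcp hh.2)]; rfl
    · rw [if_neg h1]
      by_cases h2 : r' = 2 ∧ c' = 1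
      · rw [if_pos h2, if_neg (by rintro ⟨hr, -⟩; rw [hr] at h2; exact absurd h2.1 (by omega))]
        obtain ⟨hr, hc⟩ := h2
        subst hr; subst hc
        rfl
      · rw [if_neg h2, if_neg (fun hh => h1 ⟨hh.1, by rw [hh.2]; exact ⟨hp1, hpk⟩⟩)]
        exact (entry_zero_outside_shape T h1 h2).symm
  · intro j
    rw [A, mkTab_entry]
    by_cases hjk : 1 ≤ j ∧ j ≤ k
    · rw [if_pos ⟨rfl, hjk.1, hjk.2⟩]
    · rw [if_neg (fun hh => hjk hh.2), if_neg (by rintro ⟨hr, -⟩; omega)]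
      have hout : T.entry 1 j = 0 :=
        entry_zero_outside_shape T (fun hh => hjk hh.2) (by rintro ⟨hr, -⟩; omega)
      by_cases hjp : j = p
      · exfalso; exact hjk (by rw [hjp]; exact ⟨hp1, hpk⟩)
      · rw [if_neg hjp, A, hout]
  · rw [B, mkTab_entry, if_neg (by rintro ⟨hr, -⟩; omega), if_pos ⟨rfl, rfl⟩]

lemma bumpB_exists (hn : 2 ≤ n) (hk : 1 ≤ k) (T : Tab) (hBn : B T ≤ n)
    (hnorow : ∀ j, 1 ≤ j → j ≤ k → A T j ≠ B T) :
    ∃ T₀ : Tab, MoveB T T₀ ∧ (∀ j, A T₀ j = A T j) ∧ B T₀ = B T + 1 := by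
  have hab : A T 1 < B T + 1 := by have := A_lt_B T hk; omega
  refine ⟨mkTab (A T) (B T + 1) hk (fun j h1 h2 => A_pos T h1 h2) (fun j h1 h2 => A_le T h1 h2)
    (fun j h1 h2 => A_step T h1 h2) hab (by omega), ⟨hBn, hnorow, ?_⟩, ?_, ?_⟩
  · intro r' c'
    rw [mkTab_entry]
    by_cases h1 : r' = 1 ∧ 1 ≤ c' ∧ c' ≤ k
    · rw [if_pos h1, if_neg (by rintro ⟨hr, -⟩; rw [hr] at h1; exact absurd h1.1 (by omega))]
      obtain ⟨hr, -, -⟩ := h1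
      subst hr; rfl
    · rw [if_neg h1]
      by_cases h2 : r' = 2 ∧ c' = 1
      · rw [if_pos h2, if_pos h2]
      · rw [if_neg h2, if_neg h2]
        exact (entry_zero_outside_shape T h1 h2).symm
  · intro j
    rw [A, A, mkTab_entry]
    by_cases hjk : 1 ≤ j ∧ j ≤ k
    · rw [if_pos ⟨rfl, hjk.1, hjk.2⟩]; rfl
    · rw [if_neg (fun hh => hjk hh.2), if_neg (by rintro ⟨hr, -⟩; omega)]
      exact (entry_zero_outside_shape T (fun hh => hjk hh.2) (by rintro ⟨hr, -⟩; omega)).symm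
  · rw [B, mkTab_entry, if_neg (by rintro ⟨hr, -⟩; omega), if_pos ⟨rfl, rfl⟩]


/-! ### measure and the main induction -/

def meas (T T' : Tab) : ℕ := (B T' - B T) + ∑ j ∈ Finset.Icc 1 k, (A T' j - A T j)

lemma meas_lt_row {T T₀ T' : Tab} {p : ℕ} (hp1 : 1 ≤ p) (hpk : p ≤ k)
    (hA0 : ∀ j, A T₀ j = if j = p then A T p + 1 else A T j) (hB0 : B T₀ = B T)
    (hlt : A T p < A T' p) : meas T₀ T' < meas T T' := by
  unfold meas
  rw [hB0]
  have hsum : ∑ j ∈ Finset.Icc 1 k, (A T' j - A T₀ j) <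
      ∑ j ∈ Finset.Icc 1 k, (A T' j - A T j) := by
    apply Finset.sum_lt_sum
    · intro i _
      rw [hA0 i]
      by_cases h : i = p
      · rw [if_pos h, h]; omega
      · rw [if_neg h]
    · exact ⟨p, Finset.mem_Icc.mpr ⟨hp1, hpk⟩, by rw [hA0 p, if_pos rfl]; omega⟩
  omega

lemma meas_lt_b {T T₀ T' : Tab} (hA0 : ∀ j, A T₀ j = A T j) (hB0 : B T₀ = B T + 1)
    (hlt : B T < B T') : meas T₀ T' < meas T T' := by
  unfold meas
  rw [hB0]
  have hsum : ∑ j ∈ Finset.Icc 1 k, (A T' j - A T₀ j) =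
      ∑ j ∈ Finset.Icc 1 k, (A T' j - A T j) := by
    apply Finset.sum_congr rfl
    intro i _
    rw [hA0 i]
  omega

lemma exists_step (hn : 2 ≤ n) (hk : 1 ≤ k) {T T' : Tab} (h : Rle T T') (hne : T ≠ T') :
    ∃ T₀ : Tab, Move T T₀ ∧ Rle T₀ T' ∧ meas T₀ T' < meas T T' := by
  obtain ⟨hpt, hb, hc1, hc2⟩ := h
  by_cases hDne : ((Finset.Icc 1 k).filter (fun j => A T j < A T' j)).Nonempty
  · set D := (Finset.Icc 1 k).filter (fun j => A T j < A T' j) with hD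
    set p := D.max' hDne with hp
    have hpD : p ∈ D := D.max'_mem hDne
    rw [hD, Finset.mem_filter, Finset.mem_Icc] at hpD
    obtain ⟨⟨hp1, hpk⟩, hplt⟩ := hpD
    have hmaxD : ∀ j, 1 ≤ j → j ≤ k → A T j < A T' j → j ≤ p := fun j h1 h2 h3 =>
      D.le_max' j (by rw [hD, Finset.mem_filter, Finset.mem_Icc]; exact ⟨⟨h1, h2⟩, h3⟩)
    have hnotD : ∀ j, 1 ≤ j → j ≤ k → p < j → A T' j = A T j := by
      intro j h1 h2 h3
      have h4 := hmaxD j h1 h2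
      have h5 := hpt j h1 h2
      by_cases h6 : A T j < A T' j
      · exact absurd (h4 h6) (by omega)
      · omega
    have hAn : A T p ≤ n := by
      have := A_le T' hp1 hpk
      omega
    have hsort : p = k ∨ A T p < A T (p+1) := by
      rcases Nat.eq_or_lt_of_le hpk with h | h
      · exact Or.inl h
      · right
        have he : A T' (p+1) = A T (p+1) := hnotD (p+1) (by omega) (by omega) (by omega)
        have hm : A T' p ≤ A T' (p+1) := A_step T' hp1 (by omega)
        omega
    by_cases case1 : B T ≤ A T p
    · -- bump row p, entry already at or beyond B T
      obtain ⟨T₀, hmv, hA0, hB0⟩ := bumpRow_exists hn hk T hp1 hpk hAn hsort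
        (fun hh => absurd hh (by omega))
      refine ⟨T₀, Or.inl ⟨p, hmv⟩, ⟨?_, by omega, ?_, ?_⟩, meas_lt_row hp1 hpk hA0 hB0 hplt⟩
      · intro j h1 h2
        rw [hA0 j]
        by_cases hjp : j = p
        · rw [if_pos hjp, hjp]; omega
        · rw [if_neg hjp]; exact hpt j h1 h2
      · intro j h1 h2 hbb
        rw [hB0, hA0 j] at hbb
        by_cases hjp : j = p
        · subst hjp; exact hc1 p h1 h2 case1
        · rw [if_neg hjp] at hbb; exact hc1 j h1 h2 hbb
      · intro j h1 h2 hy1 hy2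
        rw [hB0] at hy1 ⊢
        rw [hA0 j] at hy1
        by_cases hjp : j = p
        · subst hjp; rw [if_pos rfl] at hy1; omega
        · rw [if_neg hjp] at hy1; exact hc2 j h1 h2 hy1 hy2
    · by_cases case2 : A T p + 1 < B T
      · -- bump row p, stays strictly below B T
        obtain ⟨T₀, hmv, hA0, hB0⟩ := bumpRow_exists hn hk T hp1 hpk hAn hsort
          (fun hh => absurd hh (by omega))
        refine ⟨T₀, Or.inl ⟨p, hmv⟩, ⟨?_, by omega, ?_, ?_⟩, meas_lt_row hp1 hpk hA0 hB0 hplt⟩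
        · intro j h1 h2
          rw [hA0 j]
          by_cases hjp : j = p
          · rw [if_pos hjp, hjp]; omega
          · rw [if_neg hjp]; exact hpt j h1 h2
        · intro j h1 h2 hbb
          rw [hB0, hA0 j] at hbb
          by_cases hjp : j = p
          · subst hjp; rw [if_pos rfl] at hbb; omega
          · rw [if_neg hjp] at hbb; exact hc1 j h1 h2 hbb
        · intro j h1 h2 hy1 hy2
          rw [hB0] at hy1 ⊢
          rw [hA0 j] at hy1
          by_cases hjp : j = p
          · subst hjp; exact hc2 p h1 h2 (by omega) hy2
          · rw [if_neg hjp] at hy1; exact hc2 j h1 h2 hy1 hy2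
      · -- A T p + 1 = B T
        have heq : B T = A T p + 1 := by omega
        by_cases hcross : B T' ≤ A T' p
        · obtain ⟨hp2, hcm⟩ := hc2 p hp1 hpk (by omega) hcross
          by_cases hcompan : A T (p-1) = A T p
          · -- crossing bump at p
            obtain ⟨T₀, hmv, hA0, hB0⟩ := bumpRow_exists hn hk T hp1 hpk hAn hsort
              (fun _ => ⟨hp2, hcompan⟩)
            refine ⟨T₀, Or.inl ⟨p, hmv⟩, ⟨?_, by omega, ?_, ?_⟩,
              meas_lt_row hp1 hpk hA0 hB0 hplt⟩
            · intro j h1 h2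
              rw [hA0 j]
              by_cases hjp : j = p
              · rw [if_pos hjp, hjp]; omega
              · rw [if_neg hjp]; exact hpt j h1 h2
            · intro j h1 h2 hbb
              rw [hB0, hA0 j] at hbb
              by_cases hjp : j = p
              · subst hjp; exact hcross
              · rw [if_neg hjp] at hbb; exact hc1 j h1 h2 hbb
            · intro j h1 h2 hy1 hy2
              rw [hB0] at hy1 ⊢
              rw [hA0 j] at hy1
              by_cases hjp : j = p
              · subst hjp; rw [if_pos rfl] at hy1; omega
              · rw [if_neg hjp] at hy1; exact hc2 j h1 h2 hy1 hy2
          · -- bump at p-1 to create the companion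
            have hstep : A T (p-1) ≤ A T p := A_mono T (by omega) (by omega) hpk
            have hlt' : A T (p-1) < A T p := by omega
            have hpp : p - 1 + 1 = p := by omega
            obtain ⟨T₀, hmv, hA0, hB0⟩ := bumpRow_exists hn hk T (p := p-1) (by omega) (by omega)
              (by omega) (Or.inr (by rw [hpp]; exact hlt')) (fun hh => absurd hh (by omega))
            refine ⟨T₀, Or.inl ⟨p-1, hmv⟩, ⟨?_, by omega, ?_, ?_⟩,
              meas_lt_row (by omega) (by omega) hA0 hB0 (by omega)⟩
            · intro j h1 h2
              rw [hA0 j]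
              by_cases hjp : j = p-1
              · rw [if_pos hjp, hjp]; omega
              · rw [if_neg hjp]; exact hpt j h1 h2
            · intro j h1 h2 hbb
              rw [hB0, hA0 j] at hbb
              by_cases hjp : j = p-1
              · subst hjp; rw [if_pos rfl] at hbb; omega
              · rw [if_neg hjp] at hbb; exact hc1 j h1 h2 hbb
            · intro j h1 h2 hy1 hy2
              rw [hB0] at hy1 ⊢
              rw [hA0 j] at hy1
              by_cases hjp : j = p-1
              · subst hjp; exact hc2 (p-1) h1 h2 (by omega) hy2
              · rw [if_neg hjp] at hy1; exact hc2 j h1 h2 hy1 hy2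
        · -- bump B
          have hblt : B T < B T' := by
            rcases Nat.eq_or_lt_of_le hb with heqb | h
            · exfalso
              have h1 : A T' p ≤ A T p := by omega
              omega
            · exact h
          have hnorow : ∀ j, 1 ≤ j → j ≤ k → A T j ≠ B T := by
            intro j h1 h2 heqj
            by_cases hjp : j ≤ p
            · have : A T j ≤ A T p := A_mono T h1 hjp hpk
              omega
            · have he : A T' j = A T j := hnotD j h1 h2 (by omega)
              have := hc1 j h1 h2 (by omega)
              omega
          obtain ⟨T₀, hmv, hA0, hB0⟩ := bumpB_exists hn hk T (by have := B_le T'; omega) hnorow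
          refine ⟨T₀, Or.inr hmv, ⟨?_, by omega, ?_, ?_⟩, meas_lt_b hA0 hB0 hblt⟩
          · intro j h1 h2
            rw [hA0 j]; exact hpt j h1 h2
          · intro j h1 h2 hbb
            rw [hB0, hA0 j] at hbb
            exact hc1 j h1 h2 (by omega)
          · intro j h1 h2 hy1 hy2
            rw [hB0, hA0 j] at hy1
            exfalso
            have hne1 : A T j ≠ B T := hnorow j h1 h2
            have hlt1 : A T j < B T := by omega
            have hjD : A T j < A T' j := by omega
            have hjp : j ≤ p := hmaxD j h1 h2 hjD
            rcases Nat.eq_or_lt_of_le hjp with rfl | hlt2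
            · omega
            · have : A T' j ≤ A T' p := A_mono T' h1 (by omega) hpk
              omega
  · -- no row difference: bump b
    rw [Finset.not_nonempty_iff_eq_empty] at hDne
    have hAeq : ∀ j, 1 ≤ j → j ≤ k → A T' j = A T j := by
      intro j h1 h2
      have h5 := hpt j h1 h2
      by_cases h6 : A T j < A T' j
      · exfalso
        have : j ∈ (Finset.Icc 1 k).filter (fun j => A T j < A T' j) := by
          rw [Finset.mem_filter, Finset.mem_Icc]; exact ⟨⟨h1, h2⟩, h6⟩
        rw [hDne] at this
        exact absurd this (Finset.notMem_empty j)
      · omega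
    have hblt : B T < B T' := by
      rcases Nat.eq_or_lt_of_le hb with heqb | h
      · exact absurd (tab_ext hk (fun j h1 h2 => (hAeq j h1 h2).symm) heqb) hne
      · exact h
    have hnorow : ∀ j, 1 ≤ j → j ≤ k → A T j ≠ B T := by
      intro j h1 h2 heqj
      have := hc1 j h1 h2 (by omega)
      have := hAeq j h1 h2
      omega
    obtain ⟨T₀, hmv, hA0, hB0⟩ := bumpB_exists hn hk T (by have := B_le T'; omega) hnorow
    refine ⟨T₀, Or.inr hmv, ⟨?_, by omega, ?_, ?_⟩, meas_lt_b hA0 hB0 hblt⟩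
    · intro j h1 h2
      rw [hA0 j]; exact hpt j h1 h2
    · intro j h1 h2 hbb
      rw [hB0, hA0 j] at hbb
      exact hc1 j h1 h2 (by omega)
    · intro j h1 h2 hy1 hy2
      rw [hB0, hA0 j] at hy1
      have := hAeq j h1 h2
      omega

lemma Rle_LE (hn : 2 ≤ n) (hk : 1 ≤ k) {T T' : Tab} (h : Rle T T') :
    CrystalLE n (lam k) T T' := by
  suffices H : ∀ m (T : Tab), meas T T' ≤ m → Rle T T' → CrystalLE n (lam k) T T' from
    H (meas T T') T le_rfl h
  intro m
  induction m with
  | zero =>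
    intro T hm hr
    by_cases hne : T = T'
    · subst hne; exact Relation.ReflTransGen.refl
    · obtain ⟨T₀, _, _, hlt⟩ := exists_step hn hk hr hne
      omega
  | succ m ih =>
    intro T hm hr
    by_cases hne : T = T'
    · subst hne; exact Relation.ReflTransGen.refl
    · obtain ⟨T₀, hmv, hr0, hlt⟩ := exists_step hn hk hr hne
      exact Relation.ReflTransGen.head ((cover_iff_move hn hk T T₀).mpr hmv)
        (ih T₀ (by omega) hr0)

/-! ### join -/

def bJ (T1 T2 : Tab) : ℕ := max (B T1) (B T2)

def fixJ (T1 T2 : Tab) (j : ℕ) : ℕ :=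
  if j + 1 ≤ k ∧ (B T1 ≤ A T1 (j+1) ∨ B T2 ≤ A T2 (j+1)) then
    max (if A T1 (j+1) < B T1 then B T1 - 1 else 0)
        (if A T2 (j+1) < B T2 then B T2 - 1 else 0)
  else 0

def aJ (T1 T2 : Tab) (j : ℕ) : ℕ :=
  max (max (A T1 j) (A T2 j))
      (max (if B T1 ≤ A T1 j ∨ B T2 ≤ A T2 j then bJ T1 T2 else 0) (fixJ T1 T2 j))

variable {T1 T2 : Tableau n (lam k)}

lemma A1_le_aJ (j : ℕ) : A T1 j ≤ aJ T1 T2 j := by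
  unfold aJ; exact le_trans (le_max_left _ _) (le_max_left _ _)
lemma A2_le_aJ (j : ℕ) : A T2 j ≤ aJ T1 T2 j := by
  unfold aJ; exact le_trans (le_max_right _ _) (le_max_left _ _)
lemma fixJ_le_aJ (j : ℕ) : fixJ T1 T2 j ≤ aJ T1 T2 j := by
  unfold aJ; exact le_trans (le_max_right _ _) (le_max_right _ _)

lemma bJ_le_aJ_of_cross {j : ℕ} (hc : B T1 ≤ A T1 j ∨ B T2 ≤ A T2 j) :
    bJ T1 T2 ≤ aJ T1 T2 j := by
  unfold aJ
  rw [if_pos hc]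
  exact le_trans (le_max_left _ _) (le_max_right _ _)

lemma fixJ_le {j m : ℕ}
    (h : j + 1 ≤ k → (B T1 ≤ A T1 (j+1) ∨ B T2 ≤ A T2 (j+1)) →
      (A T1 (j+1) < B T1 → B T1 - 1 ≤ m) ∧ (A T2 (j+1) < B T2 → B T2 - 1 ≤ m)) :
    fixJ T1 T2 j ≤ m := by
  rw [fixJ]
  by_cases hc : j + 1 ≤ k ∧ (B T1 ≤ A T1 (j+1) ∨ B T2 ≤ A T2 (j+1))
  · rw [if_pos hc]
    obtain ⟨hm1, hm2⟩ := h hc.1 hc.2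
    by_cases e1 : A T1 (j+1) < B T1
    · by_cases e2 : A T2 (j+1) < B T2
      · rw [if_pos e1, if_pos e2]; exact max_le (hm1 e1) (hm2 e2)
      · rw [if_pos e1, if_neg e2]; exact max_le (hm1 e1) (by omega)
    · by_cases e2 : A T2 (j+1) < B T2
      · rw [if_neg e1, if_pos e2]; exact max_le (by omega) (hm2 e2)
      · rw [if_neg e1, if_neg e2]; omega
  · rw [if_neg hc]; omega

lemma aJ_le {j m : ℕ} (h1 : A T1 j ≤ m) (h2 : A T2 j ≤ m)
    (h3 : (B T1 ≤ A T1 j ∨ B T2 ≤ A T2 j) → bJ T1 T2 ≤ m) (h4 : fixJ T1 T2 j ≤ m) :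
    aJ T1 T2 j ≤ m := by
  rw [aJ]
  by_cases hc : B T1 ≤ A T1 j ∨ B T2 ≤ A T2 j
  · rw [if_pos hc]; have := h3 hc; omega
  · rw [if_neg hc]; omega

lemma le_fixJ₁ {j : ℕ} (hj : j + 1 ≤ k) (hc : B T1 ≤ A T1 (j+1) ∨ B T2 ≤ A T2 (j+1))
    (h : A T1 (j+1) < B T1) : B T1 - 1 ≤ fixJ T1 T2 j := by
  rw [fixJ, if_pos ⟨hj, hc⟩, if_pos h]
  exact le_max_left _ _

lemma le_fixJ₂ {j : ℕ} (hj : j + 1 ≤ k) (hc : B T1 ≤ A T1 (j+1) ∨ B T2 ≤ A T2 (j+1))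
    (h : A T2 (j+1) < B T2) : B T2 - 1 ≤ fixJ T1 T2 j := by
  rw [fixJ, if_pos ⟨hj, hc⟩, if_pos h]
  exact le_max_right _ _

lemma aJ_lt_bJ (hk : 1 ≤ k) {j : ℕ} (hj1 : 1 ≤ j) (hj2 : j ≤ k)
    (hnc : ¬ (B T1 ≤ A T1 j ∨ B T2 ≤ A T2 j)) : aJ T1 T2 j < bJ T1 T2 := by
  have hb1 : 2 ≤ B T1 := B_pos T1 hk
  have hb2 : 2 ≤ B T2 := B_pos T2 hk
  have h4 : fixJ T1 T2 j ≤ bJ T1 T2 - 1 := by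
    apply fixJ_le
    intro _ _
    constructor
    · intro _; rw [bJ]; omega
    · intro _; rw [bJ]; omega
  have h5 : aJ T1 T2 j ≤ bJ T1 T2 - 1 := by
    apply aJ_le _ _ (fun hc => absurd hc hnc) h4
    · rw [bJ]; omega
    · rw [bJ]; omega
  rw [bJ] at h5 ⊢
  omega

lemma joinTab (hn : 2 ≤ n) (hk : 1 ≤ k) (T1 T2 : Tab) :
    ∃ J : Tab, (∀ j, 1 ≤ j → j ≤ k → A J j = aJ T1 T2 j) ∧ B J = bJ T1 T2 := by
  have hb1 : 2 ≤ B T1 := B_pos T1 hk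
  have hb2 : 2 ≤ B T2 := B_pos T2 hk
  have hab : aJ T1 T2 1 < bJ T1 T2 := by
    apply aJ_lt_bJ hk le_rfl hk
    have := A_lt_B T1 hk
    have := A_lt_B T2 hk
    omega
  refine ⟨mkTab (aJ T1 T2) (bJ T1 T2) hk ?_ ?_ ?_ hab (by rw [bJ]; have := B_le T1; have := B_le T2; omega),
    fun j h1 h2 => mkTab_A _ _ _ _ _ _ _ _ h1 h2, mkTab_B _ _ _ _ _ _ _ _⟩
  · intro j h1 h2
    have := A_pos T1 h1 h2
    have := A1_le_aJ (T1 := T1) (T2 := T2) j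
    omega
  · intro j h1 h2
    have ha1 := A_le T1 h1 h2
    have ha2 := A_le T2 h1 h2
    have hbl1 := B_le T1
    have hbl2 := B_le T2
    exact aJ_le ha1 ha2 (fun _ => by rw [bJ]; omega)
      (fixJ_le (fun _ _ => ⟨fun _ => by omega, fun _ => by omega⟩))
  · intro j h1 h2
    apply aJ_le
    · exact le_trans (A_step T1 h1 h2) (A1_le_aJ _)
    · exact le_trans (A_step T2 h1 h2) (A2_le_aJ _)
    · intro hc
      apply bJ_le_aJ_of_cross
      rcases hc with hc | hc
      · exact Or.inl (le_trans hc (A_step T1 h1 h2))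
      · exact Or.inr (le_trans hc (A_step T2 h1 h2))
    · apply fixJ_le
      intro hjk hcr
      have hbig : bJ T1 T2 ≤ aJ T1 T2 (j+1) := bJ_le_aJ_of_cross hcr
      rw [bJ] at hbig
      exact ⟨fun _ => by omega, fun _ => by omega⟩

lemma Rle_T1_join (hn : 2 ≤ n) (hk : 1 ≤ k) {J : Tab}
    (hAJ : ∀ j, 1 ≤ j → j ≤ k → A J j = aJ T1 T2 j) (hBJ : B J = bJ T1 T2) :
    Rle T1 J := by
  refine ⟨?_, ?_, ?_, ?_⟩
  · intro j h1 h2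
    rw [hAJ j h1 h2]; exact A1_le_aJ j
  · rw [hBJ, bJ]; omega
  · intro j h1 h2 hb
    rw [hAJ j h1 h2, hBJ]
    exact bJ_le_aJ_of_cross (Or.inl hb)
  · intro j h1 h2 hy1 hy2
    rw [hBJ, hAJ j h1 h2] at hy2
    have hcross : B T1 ≤ A T1 j ∨ B T2 ≤ A T2 j := by
      by_contra hnc
      have := aJ_lt_bJ hk h1 h2 hnc
      omega
    have hc2' : B T2 ≤ A T2 j := by
      rcases hcross with h | h
      · omega
      · exact h
    have hj2' : 2 ≤ j := by
      rcases Nat.eq_or_lt_of_le h1 with h | h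
      · exfalso
        rw [← h] at hc2'
        have := A_lt_B T2 hk
        omega
      · omega
    refine ⟨hj2', ?_⟩
    rw [hAJ (j-1) (by omega) (by omega)]
    have hpp : j - 1 + 1 = j := by omega
    have hfix : B T1 - 1 ≤ fixJ T1 T2 (j-1) := by
      apply le_fixJ₁ (by omega)
      · rw [hpp]; exact hcross
      · rw [hpp]; exact hy1
    exact le_trans hfix (fixJ_le_aJ _)

lemma Rle_T2_join (hn : 2 ≤ n) (hk : 1 ≤ k) {J : Tab}
    (hAJ : ∀ j, 1 ≤ j → j ≤ k → A J j = aJ T1 T2 j) (hBJ : B J = bJ T1 T2) :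
    Rle T2 J := by
  refine ⟨?_, ?_, ?_, ?_⟩
  · intro j h1 h2
    rw [hAJ j h1 h2]; exact A2_le_aJ j
  · rw [hBJ, bJ]; omega
  · intro j h1 h2 hb
    rw [hAJ j h1 h2, hBJ]
    exact bJ_le_aJ_of_cross (Or.inr hb)
  · intro j h1 h2 hy1 hy2
    rw [hBJ, hAJ j h1 h2] at hy2
    have hcross : B T1 ≤ A T1 j ∨ B T2 ≤ A T2 j := by
      by_contra hnc
      have := aJ_lt_bJ hk h1 h2 hnc
      omega
    have hc1' : B T1 ≤ A T1 j := by
      rcases hcross with h | h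
      · exact h
      · omega
    have hj2' : 2 ≤ j := by
      rcases Nat.eq_or_lt_of_le h1 with h | h
      · exfalso
        rw [← h] at hc1'
        have := A_lt_B T1 hk
        omega
      · omega
    refine ⟨hj2', ?_⟩
    rw [hAJ (j-1) (by omega) (by omega)]
    have hpp : j - 1 + 1 = j := by omega
    have hfix : B T2 - 1 ≤ fixJ T1 T2 (j-1) := by
      apply le_fixJ₂ (by omega)
      · rw [hpp]; exact hcross
      · rw [hpp]; exact hy1
    exact le_trans hfix (fixJ_le_aJ _)

lemma Rle_join_X (hn : 2 ≤ n) (hk : 1 ≤ k) {J X : Tab}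
    (hAJ : ∀ j, 1 ≤ j → j ≤ k → A J j = aJ T1 T2 j) (hBJ : B J = bJ T1 T2)
    (hx1 : Rle T1 X) (hx2 : Rle T2 X) : Rle J X := by
  obtain ⟨p1, b1, c1, d1⟩ := hx1
  obtain ⟨p2, b2, c2, d2⟩ := hx2
  have hbX : bJ T1 T2 ≤ B X := by rw [bJ]; omega
  have hcrossX : ∀ j, 1 ≤ j → j ≤ k → (B T1 ≤ A T1 j ∨ B T2 ≤ A T2 j) → B X ≤ A X j := by
    intro j h1 h2 hc
    rcases hc with hc | hc
    · exact c1 j h1 h2 hc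
    · exact c2 j h1 h2 hc
  refine ⟨?_, by rw [hBJ]; exact hbX, ?_, ?_⟩
  · intro j h1 h2
    rw [hAJ j h1 h2]
    apply aJ_le (p1 j h1 h2) (p2 j h1 h2)
    · intro hc
      exact le_trans hbX (hcrossX j h1 h2 hc)
    · apply fixJ_le
      intro hjk hcr
      have hAX : B X ≤ A X (j+1) := hcrossX (j+1) (by omega) hjk hcr
      constructor
      · intro e1
        have := d1 (j+1) (by omega) hjk e1 hAX
        have hred : j + 1 - 1 = j := by omega
        rw [hred] at this
        exact this.2
      · intro e2
        have := d2 (j+1) (by omega) hjk e2 hAX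
        have hred : j + 1 - 1 = j := by omega
        rw [hred] at this
        exact this.2
  · intro j h1 h2 hb
    rw [hBJ, hAJ j h1 h2] at hb
    have hcross : B T1 ≤ A T1 j ∨ B T2 ≤ A T2 j := by
      by_contra hnc
      have := aJ_lt_bJ hk h1 h2 hnc
      omega
    exact hcrossX j h1 h2 hcross
  · intro j h1 h2 hy1 hy2
    rw [hBJ, hAJ j h1 h2] at hy1
    rw [hBJ]
    have hnc : ¬ (B T1 ≤ A T1 j ∨ B T2 ≤ A T2 j) := by
      intro hc
      have := bJ_le_aJ_of_cross (T1 := T1) (T2 := T2) hc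
      omega
    have hn1 : A T1 j < B T1 := by omega
    have hn2 : A T2 j < B T2 := by omega
    obtain ⟨hj1', hd1⟩ := d1 j h1 h2 hn1 hy2
    obtain ⟨hj2', hd2⟩ := d2 j h1 h2 hn2 hy2
    refine ⟨hj1', ?_⟩
    rw [bJ]
    omega

/-! ### meet -/

def bM0 (T1 T2 : Tableau n (lam k)) : ℕ := min (B T1) (B T2)

def gM (T1 T2 : Tableau n (lam k)) (j : ℕ) : ℕ :=
  min (if B T1 ≤ A T1 j ∧ A T2 j < B T2 then A T1 (j-1) + 1 else bM0 T1 T2)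
      (if B T2 ≤ A T2 j ∧ A T1 j < B T1 then A T2 (j-1) + 1 else bM0 T1 T2)

def bM (T1 T2 : Tableau n (lam k)) (hk : 1 ≤ k) : ℕ :=
  min (bM0 T1 T2) ((Finset.Icc 1 k).inf' (Finset.nonempty_Icc.mpr hk) (gM T1 T2))

def aM (T1 T2 : Tableau n (lam k)) (hk : 1 ≤ k) (j : ℕ) : ℕ :=
  if B T1 ≤ A T1 j ∧ B T2 ≤ A T2 j then min (A T1 j) (A T2 j)
  else min (min (A T1 j) (A T2 j)) (bM T1 T2 hk - 1)

lemma bM_le_bM0 (hk : 1 ≤ k) : bM T1 T2 hk ≤ bM0 T1 T2 := min_le_left _ _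

lemma bM_le_g (hk : 1 ≤ k) {j : ℕ} (h1 : 1 ≤ j) (h2 : j ≤ k) :
    bM T1 T2 hk ≤ gM T1 T2 j :=
  le_trans (min_le_right _ _) (Finset.inf'_le _ (Finset.mem_Icc.mpr ⟨h1, h2⟩))

lemma le_bM (hk : 1 ≤ k) {x : ℕ} (h0 : x ≤ bM0 T1 T2)
    (hg : ∀ j, 1 ≤ j → j ≤ k → x ≤ gM T1 T2 j) : x ≤ bM T1 T2 hk :=
  le_min h0 (Finset.le_inf' _ _ (fun j hj =>
    hg j (Finset.mem_Icc.mp hj).1 (Finset.mem_Icc.mp hj).2))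

lemma bM_pos (hk : 1 ≤ k) : 2 ≤ bM T1 T2 hk := by
  have hb1 := B_pos T1 hk
  have hb2 := B_pos T2 hk
  apply le_bM hk
  · rw [bM0]; omega
  · intro j h1 h2
    rw [gM]
    by_cases hj1 : j = 1
    · subst hj1
      have ha1 := A_lt_B T1 hk
      have ha2 := A_lt_B T2 hk
      rw [if_neg (by omega), if_neg (by omega), bM0]
      omega
    · have hp1 : 1 ≤ A T1 (j-1) := A_pos T1 (by omega) (by omega)
      have hp2 : 1 ≤ A T2 (j-1) := A_pos T2 (by omega) (by omega)
      by_cases e1 : B T1 ≤ A T1 j ∧ A T2 j < B T2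
      · rw [if_pos e1]
        by_cases e2 : B T2 ≤ A T2 j ∧ A T1 j < B T1
        · rw [if_pos e2]; omega
        · rw [if_neg e2, bM0]; omega
      · rw [if_neg e1]
        by_cases e2 : B T2 ≤ A T2 j ∧ A T1 j < B T1
        · rw [if_pos e2, bM0]; omega
        · rw [if_neg e2, bM0]; omega

lemma aM_le_A1 (hk : 1 ≤ k) (j : ℕ) : aM T1 T2 hk j ≤ A T1 j := by
  rw [aM]; split_ifs <;> omega

lemma aM_le_A2 (hk : 1 ≤ k) (j : ℕ) : aM T1 T2 hk j ≤ A T2 j := by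
  rw [aM]; split_ifs <;> omega

lemma aM_lt_bM_of_notboth (hk : 1 ≤ k) {j : ℕ}
    (hnb : ¬ (B T1 ≤ A T1 j ∧ B T2 ≤ A T2 j)) : aM T1 T2 hk j < bM T1 T2 hk := by
  rw [aM, if_neg hnb]
  have := bM_pos (T1 := T1) (T2 := T2) hk
  omega

lemma bM_le_aM_of_both (hk : 1 ≤ k) {j : ℕ} (hb : B T1 ≤ A T1 j ∧ B T2 ≤ A T2 j) :
    bM T1 T2 hk ≤ aM T1 T2 hk j := by
  rw [aM, if_pos hb]
  have h0 := bM_le_bM0 (T1 := T1) (T2 := T2) hk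
  rw [bM0] at h0
  omega

lemma meetTab (hn : 2 ≤ n) (hk : 1 ≤ k) (T1 T2 : Tableau n (lam k)) :
    ∃ M : Tableau n (lam k),
      (∀ j, 1 ≤ j → j ≤ k → A M j = aM T1 T2 hk j) ∧ B M = bM T1 T2 hk := by
  have hbp := bM_pos (T1 := T1) (T2 := T2) hk
  have hab : aM T1 T2 hk 1 < bM T1 T2 hk := by
    apply aM_lt_bM_of_notboth hk
    have := A_lt_B T1 hk
    omega
  have hble : bM T1 T2 hk ≤ n + 1 := by
    have := bM_le_bM0 (T1 := T1) (T2 := T2) hk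
    have := B_le T1
    rw [bM0] at *
    omega
  refine ⟨mkTab (aM T1 T2 hk) (bM T1 T2 hk) hk ?_ ?_ ?_ hab hble,
    fun j h1 h2 => mkTab_A _ _ _ _ _ _ _ _ h1 h2, mkTab_B _ _ _ _ _ _ _ _⟩
  · intro j h1 h2
    have := A_pos T1 h1 h2
    have := A_pos T2 h1 h2
    rw [aM]; split_ifs <;> omega
  · intro j h1 h2
    have := A_le T1 h1 h2
    have h' := aM_le_A1 (T1 := T1) (T2 := T2) hk j
    omega
  · intro j h1 h2
    have hs1 := A_step T1 h1 h2
    have hs2 := A_step T2 h1 h2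
    by_cases hb1 : B T1 ≤ A T1 j ∧ B T2 ≤ A T2 j
    · have hb2 : B T1 ≤ A T1 (j+1) ∧ B T2 ≤ A T2 (j+1) := ⟨by omega, by omega⟩
      rw [aM, aM, if_pos hb1, if_pos hb2]
      omega
    · by_cases hb2 : B T1 ≤ A T1 (j+1) ∧ B T2 ≤ A T2 (j+1)
      · have hlt := aM_lt_bM_of_notboth (T1 := T1) (T2 := T2) hk hb1
        have hge := bM_le_aM_of_both (T1 := T1) (T2 := T2) hk hb2
        omega
      · rw [aM, aM, if_neg hb1, if_neg hb2]
        omega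

lemma Rle_meet_T1 (hn : 2 ≤ n) (hk : 1 ≤ k) {M : Tableau n (lam k)}
    (hAM : ∀ j, 1 ≤ j → j ≤ k → A M j = aM T1 T2 hk j) (hBM : B M = bM T1 T2 hk) :
    Rle M T1 := by
  have hble : bM T1 T2 hk ≤ B T1 := by
    have := bM_le_bM0 (T1 := T1) (T2 := T2) hk
    rw [bM0] at this
    omega
  refine ⟨?_, ?_, ?_, ?_⟩
  · intro j h1 h2
    rw [hAM j h1 h2]; exact aM_le_A1 hk j
  · rw [hBM]; exact hble
  · intro j h1 h2 hb
    rw [hBM, hAM j h1 h2] at hb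
    have hboth : B T1 ≤ A T1 j ∧ B T2 ≤ A T2 j := by
      by_contra hnb
      have := aM_lt_bM_of_notboth (T1 := T1) (T2 := T2) hk hnb
      omega
    exact hboth.1
  · intro j h1 h2 hy1 hy2
    rw [hBM, hAM j h1 h2] at hy1
    rw [hBM]
    have hnb : ¬ (B T1 ≤ A T1 j ∧ B T2 ≤ A T2 j) := by
      intro hb
      have := bM_le_aM_of_both (T1 := T1) (T2 := T2) hk hb
      omega
    have h2' : A T2 j < B T2 := by
      by_cases h : B T2 ≤ A T2 j
      · exact absurd ⟨hy2, h⟩ hnb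
      · omega
    have hj2 : 2 ≤ j := by
      rcases Nat.eq_or_lt_of_le h1 with h | h
      · exfalso
        have := A_lt_B T1 hk
        rw [← h] at hy2
        omega
      · omega
    refine ⟨hj2, ?_⟩
    have hg := bM_le_g (T1 := T1) (T2 := T2) hk h1 h2
    rw [gM, if_pos ⟨hy2, h2'⟩] at hg
    omega

lemma Rle_meet_T2 (hn : 2 ≤ n) (hk : 1 ≤ k) {M : Tableau n (lam k)}
    (hAM : ∀ j, 1 ≤ j → j ≤ k → A M j = aM T1 T2 hk j) (hBM : B M = bM T1 T2 hk) :
    Rle M T2 := by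
  have hble : bM T1 T2 hk ≤ B T2 := by
    have := bM_le_bM0 (T1 := T1) (T2 := T2) hk
    rw [bM0] at this
    omega
  refine ⟨?_, ?_, ?_, ?_⟩
  · intro j h1 h2
    rw [hAM j h1 h2]; exact aM_le_A2 hk j
  · rw [hBM]; exact hble
  · intro j h1 h2 hb
    rw [hBM, hAM j h1 h2] at hb
    have hboth : B T1 ≤ A T1 j ∧ B T2 ≤ A T2 j := by
      by_contra hnb
      have := aM_lt_bM_of_notboth (T1 := T1) (T2 := T2) hk hnb
      omega
    exact hboth.2
  · intro j h1 h2 hy1 hy2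
    rw [hBM, hAM j h1 h2] at hy1
    rw [hBM]
    have hnb : ¬ (B T1 ≤ A T1 j ∧ B T2 ≤ A T2 j) := by
      intro hb
      have := bM_le_aM_of_both (T1 := T1) (T2 := T2) hk hb
      omega
    have h1' : A T1 j < B T1 := by
      by_cases h : B T1 ≤ A T1 j
      · exact absurd ⟨h, hy2⟩ hnb
      · omega
    have hj2 : 2 ≤ j := by
      rcases Nat.eq_or_lt_of_le h1 with h | h
      · exfalso
        have := A_lt_B T2 hk
        rw [← h] at hy2
        omega
      · omega
    refine ⟨hj2, ?_⟩
    have hg := bM_le_g (T1 := T1) (T2 := T2) hk h1 h2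
    rw [gM, if_pos (⟨hy2, h1'⟩ : B T2 ≤ A T2 j ∧ A T1 j < B T1)] at hg
    omega

lemma Rle_X_meet (hn : 2 ≤ n) (hk : 1 ≤ k) {M X : Tableau n (lam k)}
    (hAM : ∀ j, 1 ≤ j → j ≤ k → A M j = aM T1 T2 hk j) (hBM : B M = bM T1 T2 hk)
    (hx1 : Rle X T1) (hx2 : Rle X T2) : Rle X M := by
  obtain ⟨p1, b1, c1, d1⟩ := hx1
  obtain ⟨p2, b2, c2, d2⟩ := hx2
  have hbXM : B X ≤ bM T1 T2 hk := by
    apply le_bM hk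
    · rw [bM0]; omega
    · intro j h1 h2
      rw [gM]
      apply le_min
      · by_cases e1 : B T1 ≤ A T1 j ∧ A T2 j < B T2
        · rw [if_pos e1]
          have hXj : A X j < B X := by
            by_contra hcon
            have := c2 j h1 h2 (by omega)
            omega
          have := d1 j h1 h2 hXj e1.1
          omega
        · rw [if_neg e1, bM0]; omega
      · by_cases e2 : B T2 ≤ A T2 j ∧ A T1 j < B T1
        · rw [if_pos e2]
          have hXj : A X j < B X := by
            by_contra hcon
            have := c1 j h1 h2 (by omega)
            omega
          have := d2 j h1 h2 hXj e2.1
          omega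
        · rw [if_neg e2, bM0]; omega
  refine ⟨?_, by rw [hBM]; exact hbXM, ?_, ?_⟩
  · intro j h1 h2
    rw [hAM j h1 h2, aM]
    have hpj1 := p1 j h1 h2
    have hpj2 := p2 j h1 h2
    by_cases hb : B T1 ≤ A T1 j ∧ B T2 ≤ A T2 j
    · rw [if_pos hb]; omega
    · rw [if_neg hb]
      have hXj : A X j < B X := by
        by_contra hcon
        exact hb ⟨c1 j h1 h2 (by omega), c2 j h1 h2 (by omega)⟩
      omega
  · intro j h1 h2 hb
    rw [hBM, hAM j h1 h2]
    have hboth : B T1 ≤ A T1 j ∧ B T2 ≤ A T2 j := ⟨c1 j h1 h2 hb, c2 j h1 h2 hb⟩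
    exact bM_le_aM_of_both hk hboth
  · intro j h1 h2 hy1 hy2
    rw [hBM, hAM j h1 h2] at hy2
    have hboth : B T1 ≤ A T1 j ∧ B T2 ≤ A T2 j := by
      by_contra hnb
      have := aM_lt_bM_of_notboth (T1 := T1) (T2 := T2) hk hnb
      omega
    obtain ⟨hj2, hd1⟩ := d1 j h1 h2 hy1 hboth.1
    obtain ⟨-, hd2⟩ := d2 j h1 h2 hy1 hboth.2
    refine ⟨hj2, ?_⟩
    rw [hAM (j-1) (by omega) (by omega), aM]
    split_ifs <;> omega

lemma main (hn : 2 ≤ n) (hk : 1 ≤ k) : IsCrystalLattice n (lam k) := by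
  intro T1 T2
  constructor
  · obtain ⟨M, hAM, hBM⟩ := meetTab hn hk T1 T2
    refine ⟨M, Rle_LE hn hk (Rle_meet_T1 hn hk hAM hBM),
      Rle_LE hn hk (Rle_meet_T2 hn hk hAM hBM), ?_⟩
    intro X hx1 hx2
    exact Rle_LE hn hk (Rle_X_meet hn hk hAM hBM (LE_Rle hn hk hx1) (LE_Rle hn hk hx2))
  · obtain ⟨J, hAJ, hBJ⟩ := joinTab hn hk T1 T2
    refine ⟨J, Rle_LE hn hk (Rle_T1_join hn hk hAJ hBJ),
      Rle_LE hn hk (Rle_T2_join hn hk hAJ hBJ), ?_⟩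
    intro X hx1 hx2
    exact Rle_LE hn hk (Rle_join_X hn hk hAJ hBJ (LE_Rle hn hk hx1) (LE_Rle hn hk hx2))

end Fixed
end Hook

/-- For `n ≥ 2` and `k ≥ 1`, the crystal `B_{(k,1)}^n` is a lattice. -/
theorem lattice_wide_hook (n k : ℕ) (hn : 2 ≤ n) (hk : 1 ≤ k) :
    IsCrystalLattice n
      (fun i => if i = 1 then k else if i = 2 then 1 else 0) :=
  Hook.main hn hk
end
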